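/- arXiv:2502.08746 — 6 statements merged into one kernel-verified Lean document; each statement's English description precedes it below -/
import Mathlib

section
/- Let 𝔠 be a clustering system on a finite set X with |X| > 1 satisfying property (L), and let x ∈ X. Then 𝔠 − x := {C \ {x} : C ∈ 𝔠, C ≠ {x}} satisfies property (L) on X \ {x}. -/
/-- `C` is a clustering system on `X`. -/
def IsClusteringSystem {α : Type*} (X : Set α) (C : Set (Set α)) : Prop :=
  (∀ A ∈ C, A ⊆ X) ∧ ∅ ∉ C ∧ (∀ x ∈ X, {x} ∈ C) ∧ X ∈ C

/-- Two sets overlap if their intersection is neither empty nor one of the two sets. -/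
def SetsOverlap {α : Type*} (A B : Set α) : Prop :=
  A ∩ B ≠ ∅ ∧ A ∩ B ≠ A ∧ A ∩ B ≠ B

/-- Property (L): `C₁ ∩ C₂ = C₁ ∩ C₃` whenever `C₁` overlaps both `C₂` and `C₃`. -/
def PropertyL {α : Type*} (C : Set (Set α)) : Prop :=
  ∀ C₁ ∈ C, ∀ C₂ ∈ C, ∀ C₃ ∈ C,
    SetsOverlap C₁ C₂ → SetsOverlap C₁ C₃ → C₁ ∩ C₂ = C₁ ∩ C₃

/-- The set system `C − x = {A \ {x} : A ∈ C, A ≠ {x}}`. -/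
def csMinus {α : Type*} (C : Set (Set α)) (x : α) : Set (Set α) :=
  {D | ∃ A ∈ C, A ≠ {x} ∧ D = A \ {x}}

lemma overlap_of_overlap_diff {α : Type*} {A B : Set α} {x : α}
    (h : SetsOverlap (A \ {x}) (B \ {x})) : SetsOverlap A B := by
  obtain ⟨h1, h2, h3⟩ := h
  rw [Ne, Set.inter_eq_left] at h2
  rw [Ne, Set.inter_eq_right] at h3
  refine ⟨?_, ?_, ?_⟩
  · intro he
    apply h1
    rw [Set.eq_empty_iff_forall_notMem] at he ⊢
    intro y hy
    exact he y ⟨hy.1.1, hy.2.1⟩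
  · rw [Ne, Set.inter_eq_left]
    intro hAB
    exact h2 (Set.diff_subset_diff_left hAB)
  · rw [Ne, Set.inter_eq_right]
    intro hBA
    exact h3 (Set.diff_subset_diff_left hBA)

theorem stmt2 {α : Type*} (X : Set α) (C : Set (Set α)) (hfin : X.Finite)
    (hX : X.Nontrivial) (x : α) (hx : x ∈ X) (hCS : IsClusteringSystem X C)
    (hL : PropertyL C) : PropertyL (csMinus C x) := by
  intro D₁ hD₁ D₂ hD₂ D₃ hD₃ h12 h13
  obtain ⟨A₁, hA₁, -, rfl⟩ := hD₁
  obtain ⟨A₂, hA₂, -, rfl⟩ := hD₂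
  obtain ⟨A₃, hA₃, -, rfl⟩ := hD₃
  have key : A₁ ∩ A₂ = A₁ ∩ A₃ :=
    hL A₁ hA₁ A₂ hA₂ A₃ hA₃ (overlap_of_overlap_diff h12) (overlap_of_overlap_diff h13)
  have e : ∀ B : Set α, (A₁ \ {x}) ∩ (B \ {x}) = (A₁ ∩ B) \ {x} := by
    intro B; ext y; simp [Set.mem_diff]; tauto
  rw [e, e, key]
end

section
/- Every cycle Cₙ with n ≥ 5 is a primitive graph that is not a near-cograph. -/
/-- `a,b,c,d` form an induced path on four vertices (a `P₄`) in `G`. -/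
def IsInducedP4 {β : Type*} (G : SimpleGraph β) (a b c d : β) : Prop :=
  a ≠ b ∧ a ≠ c ∧ a ≠ d ∧ b ≠ c ∧ b ≠ d ∧ c ≠ d ∧
  G.Adj a b ∧ G.Adj b c ∧ G.Adj c d ∧ ¬ G.Adj a c ∧ ¬ G.Adj a d ∧ ¬ G.Adj b d

/-- A cograph is a graph with no induced `P₄`. -/
def IsCograph {β : Type*} (G : SimpleGraph β) : Prop :=
  ∀ a b c d : β, ¬ IsInducedP4 G a b c d

/-- A near-cograph: a single vertex graph, or a graph with a vertex whose removal
yields a cograph. -/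
def IsNearCograph {β : Type*} (G : SimpleGraph β) : Prop :=
  Nat.card β = 1 ∨ ∃ v : β, IsCograph (G.induce {u | u ≠ v})

/-- A module of `G`: a nonempty vertex set whose members all have the same
neighbours outside the set. -/
def IsModule {β : Type*} (G : SimpleGraph β) (M : Set β) : Prop :=
  M.Nonempty ∧ ∀ x ∈ M, ∀ y ∈ M, ∀ z ∉ M, (G.Adj x z ↔ G.Adj y z)

/-- A primitive graph: at least four vertices and only trivial modules. -/
def IsPrimitive {β : Type*} (G : SimpleGraph β) : Prop :=
  4 ≤ Nat.card β ∧ ∀ M : Set β, IsModule G M → (∃ x, M = {x}) ∨ M = Set.univ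

open Fin.NatCast Fin.CommRing

private lemma fin_cast_inj {n : ℕ} [NeZero n] {a b : ℕ} (ha : a < n) (hb : b < n) :
    (a : Fin n) = (b : Fin n) ↔ a = b := by
  rw [Fin.ext_iff, Fin.val_cast_of_lt ha, Fin.val_cast_of_lt hb]

private lemma cyc_adj {m : ℕ} (u v : Fin (m+5)) :
    (SimpleGraph.cycleGraph (m+5)).Adj u v ↔ u - v = 1 ∨ v - u = 1 :=
  SimpleGraph.cycleGraph_adj (n := m+3)

private lemma add_cast_inj {m : ℕ} (v : Fin (m+5)) {a b : ℕ} (ha : a < m+5) (hb : b < m+5) :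
    v + (a : Fin (m+5)) = v + (b : Fin (m+5)) ↔ a = b := by
  rw [add_right_inj, fin_cast_inj ha hb]

private lemma neg_one_eq {m : ℕ} : (-1 : Fin (m+5)) = ((m + 4 : ℕ) : Fin (m+5)) := by
  have h : ((m + 4 : ℕ) : Fin (m+5)) + 1 = 0 := by
    rw [show ((m+4:ℕ):Fin (m+5)) + 1 = ((m+5:ℕ):Fin (m+5)) by push_cast; ring,
      Fin.natCast_self]
  exact neg_eq_of_add_eq_zero_left h

private lemma cyc_adj_add {m : ℕ} (v : Fin (m+5)) {a b : ℕ} (hb : b ≤ a) (ha : a < m+5) :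
    (SimpleGraph.cycleGraph (m+5)).Adj (v + (a : Fin (m+5))) (v + (b : Fin (m+5))) ↔
      (a - b = 1 ∨ a - b = m + 4) := by
  rw [cyc_adj]
  have h1 : (v + (a : Fin (m+5))) - (v + (b : Fin (m+5))) = ((a - b : ℕ) : Fin (m+5)) := by
    push_cast [Nat.cast_sub hb]; ring
  have h2 : (v + (b : Fin (m+5))) - (v + (a : Fin (m+5))) = -((a - b : ℕ) : Fin (m+5)) := by
    push_cast [Nat.cast_sub hb]; ring
  have hone : (1 : Fin (m+5)) = ((1 : ℕ) : Fin (m+5)) := by norm_num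
  rw [h1, h2, neg_eq_iff_eq_neg, neg_one_eq, hone,
    fin_cast_inj (by omega) (by omega), fin_cast_inj (by omega) (by omega)]

theorem stmt6 (n : ℕ) (hn : 5 ≤ n) :
    IsPrimitive (SimpleGraph.cycleGraph n) ∧
      ¬ IsNearCograph (SimpleGraph.cycleGraph n) := by
  obtain ⟨m, rfl⟩ : ∃ m, n = m + 5 := ⟨n - 5, by omega⟩
  constructor
  · constructor
    · simp [Nat.card_eq_fintype_card]
    · intro M hM
      obtain ⟨⟨x0, hx0⟩, hmod⟩ := hM
      by_contra hcon
      push_neg at hcon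
      obtain ⟨h1, h2⟩ := hcon
      obtain ⟨y0, hy0, hyx⟩ : ∃ y ∈ M, y ≠ x0 := by
        by_contra hc
        push_neg at hc
        exact h1 x0 (Set.eq_singleton_iff_unique_mem.mpr ⟨hx0, hc⟩)
      by_cases hcross : ∃ z ∉ M, ∃ w ∈ M, (SimpleGraph.cycleGraph (m+5)).Adj z w
      · obtain ⟨z, hz, w, hw, hadj⟩ := hcross
        have hallAdj : ∀ y ∈ M, (SimpleGraph.cycleGraph (m+5)).Adj y z := fun y hy =>
          (hmod w hw y hy z hz).mp hadj.symm
        have hMsub : ∀ y ∈ M,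
            y = z + ((m+4:ℕ) : Fin (m+5)) ∨ y = z + ((1:ℕ) : Fin (m+5)) := by
          intro y hy
          rcases (cyc_adj y z).mp (hallAdj y hy) with h | h
          · right; rw [Nat.cast_one, ← h]; ring
          · left; rw [← neg_one_eq, ← h]; ring
        have hz1 : z + ((1:ℕ) : Fin (m+5)) ∈ M ∧ z + ((m+4:ℕ) : Fin (m+5)) ∈ M := by
          rcases hMsub x0 hx0 with h | h <;> rcases hMsub y0 hy0 with h' | h'
          · exact absurd (h.symm ▸ h' : y0 = x0) hyx
          · exact ⟨h' ▸ hy0, h ▸ hx0⟩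
          · exact ⟨h ▸ hx0, h' ▸ hy0⟩
          · exact absurd (h.symm ▸ h' : y0 = x0) hyx
        have hz2 : z + ((2:ℕ) : Fin (m+5)) ∉ M := by
          intro hc
          rcases hMsub _ hc with h | h
          · rw [add_cast_inj z (by omega) (by omega)] at h; omega
          · rw [add_cast_inj z (by omega) (by omega)] at h; omega
        have hbad := (hmod _ hz1.1 _ hz1.2 _ hz2).mp
          ((cyc_adj_add z (a := 2) (b := 1) (by omega) (by omega)).mpr (by omega)).symm
        rw [cyc_adj_add z (by omega) (by omega)] at hbad
        omega
      · push_neg at hcross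
        apply h2
        have hstep : ∀ w ∈ M, w + 1 ∈ M := by
          intro w hw
          by_contra hc
          exact hcross _ hc w hw ((cyc_adj _ _).mpr (Or.inl (by ring)))
        have hall : ∀ k : ℕ, x0 + (k : Fin (m+5)) ∈ M := by
          intro k
          induction k with
          | zero => simpa using hx0
          | succ k ih =>
            have h := hstep _ ih
            have e : x0 + ((k+1 : ℕ) : Fin (m+5)) = (x0 + (k : Fin (m+5))) + 1 := by
              push_cast; ring
            rw [e]; exact h
        apply Set.eq_univ_iff_forall.mpr
        intro v
        have e : x0 + (((v - x0).val : ℕ) : Fin (m+5)) = v := by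
          rw [Fin.cast_val_eq_self]; ring
        exact e ▸ hall _
  · rintro (h | ⟨v, hc⟩)
    · simp [Nat.card_eq_fintype_card] at h
    · have hne : ∀ k : ℕ, 0 < k → k < m+5 → v + (k : Fin (m+5)) ≠ v := by
        intro k hk hk' he
        have h' : v + (k : Fin (m+5)) = v + ((0:ℕ) : Fin (m+5)) := by simpa using he
        rw [add_cast_inj v hk' (by omega)] at h'
        omega
      have hadj : ∀ a b : ℕ, b ≤ a → a < m + 5 →
          ((SimpleGraph.cycleGraph (m+5)).Adj (v + (a : Fin (m+5))) (v + (b : Fin (m+5))) ↔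
            (a - b = 1 ∨ a - b = m + 4)) := by
        intro a b hb ha; exact cyc_adj_add v hb ha
      refine hc ⟨v + ((1:ℕ):Fin (m+5)), hne 1 (by omega) (by omega)⟩
        ⟨v + ((2:ℕ):Fin (m+5)), hne 2 (by omega) (by omega)⟩
        ⟨v + ((3:ℕ):Fin (m+5)), hne 3 (by omega) (by omega)⟩
        ⟨v + ((4:ℕ):Fin (m+5)), hne 4 (by omega) (by omega)⟩
        ⟨?_, ?_, ?_, ?_, ?_, ?_, ?_, ?_, ?_, ?_, ?_, ?_⟩
      · simp only [ne_eq, Subtype.mk.injEq, add_cast_inj v (a:=1) (b:=2) (by omega) (by omega)]; omega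
      · simp only [ne_eq, Subtype.mk.injEq, add_cast_inj v (a:=1) (b:=3) (by omega) (by omega)]; omega
      · simp only [ne_eq, Subtype.mk.injEq, add_cast_inj v (a:=1) (b:=4) (by omega) (by omega)]; omega
      · simp only [ne_eq, Subtype.mk.injEq, add_cast_inj v (a:=2) (b:=3) (by omega) (by omega)]; omega
      · simp only [ne_eq, Subtype.mk.injEq, add_cast_inj v (a:=2) (b:=4) (by omega) (by omega)]; omega
      · simp only [ne_eq, Subtype.mk.injEq, add_cast_inj v (a:=3) (b:=4) (by omega) (by omega)]; omega
      · exact ((hadj 2 1 (by omega) (by omega)).mpr (by omega)).symm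
      · exact ((hadj 3 2 (by omega) (by omega)).mpr (by omega)).symm
      · exact ((hadj 4 3 (by omega) (by omega)).mpr (by omega)).symm
      · intro h; exact absurd ((hadj 3 1 (by omega) (by omega)).mp h.symm) (by omega)
      · intro h; exact absurd ((hadj 4 1 (by omega) (by omega)).mp h.symm) (by omega)
      · intro h; exact absurd ((hadj 4 2 (by omega) (by omega)).mp h.symm) (by omega)
end

section
/- Let N be a DAG on leaf set X and A ⊆ X nonempty. If A has a unique least common ancestor lca_N(A) in N, then C_N(lca_N(A)) is the unique inclusion-minimal cluster of N containing A; moreover lca_N(A) ⪯_N v for every vertex v with A ⊆ C_N(v). -/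
/-- A DAG on leaf set `α` with vertex type `V`: an acyclic directed graph whose
set of leaves (vertices of out-degree 0) is identified with `α`. -/
structure DAGOn (α V : Type) where
  /-- `E u v` : there is a directed edge from `u` to `v`. -/
  E : V → V → Prop
  /-- no directed cycles -/
  acyclic : ∀ v : V, ¬ Relation.TransGen E v v
  /-- identification of `α` with the leaves of the DAG -/
  leaf : α → V
  leaf_inj : Function.Injective leaf
  /-- the leaves (vertices without out-neighbours) are exactly the image of `leaf` -/
  isLeaf_iff : ∀ v : V, (∀ w, ¬ E v w) ↔ ∃ x, leaf x = v

namespace DAGOn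

variable {α V : Type} (N : DAGOn α V)

/-- `N.below v u` : `u ⪯ v`, i.e. there is a directed path from `v` to `u`. -/
def below (v u : V) : Prop := Relation.ReflTransGen N.E v u

/-- The cluster of `v`: the set of leaves below `v`. -/
def cluster (v : V) : Set α := {x | N.below v (N.leaf x)}

/-- `v` is a common ancestor of the leaf set `A`. -/
def IsCommonAnc (v : V) (A : Set α) : Prop := ∀ x ∈ A, N.below v (N.leaf x)

/-- `v` is a least common ancestor of `A`: a `⪯`-minimal common ancestor of `A`. -/
def IsLCA (v : V) (A : Set α) : Prop :=
  N.IsCommonAnc v A ∧ ∀ u : V, N.IsCommonAnc u A → N.below v u → u = v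

/-- A network: a DAG with a unique root (vertex of in-degree 0). -/
def IsNetwork : Prop := ∃! r : V, ∀ w, ¬ N.E w r

/-- The 2-lca property: any two leaves have a unique least common ancestor. -/
def Has2LCA : Prop := ∀ x y : α, ∃! v : V, N.IsLCA v {x, y}

/-- A hybrid vertex: in-degree at least 2. -/
def IsHybrid (v : V) : Prop := ∃ u w : V, u ≠ w ∧ N.E u v ∧ N.E w v

/-- The set `S` is connected in the underlying undirected graph of `N`. -/
def ConnOn (S : Set V) : Prop :=
  ∀ u ∈ S, ∀ v ∈ S,
    Relation.ReflTransGen (fun a b => a ∈ S ∧ b ∈ S ∧ (N.E a b ∨ N.E b a)) u v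

/-- The set `S` is biconnected: connected and without cut vertices. -/
def BiconnOn (S : Set V) : Prop := N.ConnOn S ∧ ∀ v ∈ S, N.ConnOn (S \ {v})

/-- A block: a maximal biconnected set of vertices. -/
def IsBlock (B : Set V) : Prop :=
  N.BiconnOn B ∧ ∀ B' : Set V, N.BiconnOn B' → B ⊆ B' → B' = B

/-- `v` is a `⪯`-maximal element of `B`. -/
def MaxIn (B : Set V) (v : V) : Prop := v ∈ B ∧ ∀ u ∈ B, N.below u v → u = v

/-- `N` is a level-`k` network: every block contains at most `k` hybrid vertices
other than its `⪯`-maximal vertices. -/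
def IsLevel (k : ℕ) : Prop :=
  ∀ B : Set V, N.IsBlock B →
    {v | v ∈ B ∧ N.IsHybrid v ∧ ¬ N.MaxIn B v}.ncard ≤ k

/-- The 0/1-labeled DAG `(N,t)` explains `G`: `N` has the 2-lca property and the
edges of `G` are exactly the leaf pairs whose (unique) lca is labeled `1`. -/
def Explains (t : V → Bool) (G : SimpleGraph α) : Prop :=
  N.Has2LCA ∧ ∀ x y : α, x ≠ y →
    (G.Adj x y ↔ ∃ v : V, N.IsLCA v {x, y} ∧ t v = true)

end DAGOn

/-- `G` can be explained by a 0/1-labeled level-`k` network. -/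
def LevelKExplainable {α : Type} (G : SimpleGraph α) (k : ℕ) : Prop :=
  ∃ (V : Type) (_ : Finite V) (N : DAGOn α V) (t : V → Bool),
    N.IsNetwork ∧ N.IsLevel k ∧ N.Explains t G

/-- `G` can be explained by a 0/1-labeled level-1 network. -/
def Level1Explainable {α : Type} (G : SimpleGraph α) : Prop :=
  LevelKExplainable G 1

theorem stmt9 {α V : Type} [Finite V] (N : DAGOn α V) (A : Set α)
    (hA : A.Nonempty) (l : V) (hl : N.IsLCA l A)
    (huniq : ∀ v : V, N.IsLCA v A → v = l) :
    A ⊆ N.cluster l ∧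
      ∀ v : V, A ⊆ N.cluster v → N.below v l ∧ N.cluster l ⊆ N.cluster v := by
  have hwf : WellFounded (fun a b : V => Relation.TransGen N.E b a) := by
    have : IsTrans V (fun a b : V => Relation.TransGen N.E b a) :=
      ⟨fun a b c h1 h2 => h2.trans h1⟩
    have : IsIrrefl V (fun a b : V => Relation.TransGen N.E b a) :=
      ⟨fun a h => N.acyclic a h⟩
    exact Finite.wellFounded_of_trans_of_irrefl _
  refine ⟨fun x hx => hl.1 x hx, fun v hv => ?_⟩
  have hvl : N.below v l := by
    -- find a minimal common ancestor below v
    obtain ⟨u, ⟨hu, hvu⟩, hmin⟩ := hwf.has_min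
      {u : V | N.IsCommonAnc u A ∧ N.below v u} ⟨v, fun x hx => hv hx, .refl⟩
    have hlca : N.IsLCA u A := by
      refine ⟨hu, fun w hw hbw => ?_⟩
      rcases (Relation.reflTransGen_iff_eq_or_transGen.mp hbw) with h | h
      · exact h
      · exact absurd h (hmin w ⟨hw, hvu.trans hbw⟩)
    have := huniq u hlca
    subst this
    exact hvu
  exact ⟨hvl, fun x hx => hvl.trans hx⟩
end

section
/- Let (N,t) be a 0/1-labeled network on X with the 2-lca property, and let 𝔠' ⊆ 𝔠_N be a nonempty collection of clusters. If M := ⋃_{C ∈ 𝔠'} C overlaps no cluster of 𝔠_N, then M is a module of the graph 𝒢(N,t) explained by (N,t). -/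
lemma exists_leaf_below {α V : Type} [Finite V] (N : DAGOn α V) (v : V) :
    ∃ x, N.below v (N.leaf x) := by
  have hirr : ∀ a, ¬ Relation.TransGen (Function.swap N.E) a a := by
    intro a ha
    exact N.acyclic a ((Relation.transGen_swap).mp ha)
  have hwf : WellFounded (Function.swap N.E) := by
    have : IsIrrefl V (Relation.TransGen (Function.swap N.E)) := ⟨hirr⟩
    exact Subrelation.wf (fun h => Relation.TransGen.single h)
      (Finite.wellFounded_of_trans_of_irrefl _)
  induction v using hwf.induction with
  | _ v ih =>
    by_cases h : ∀ w, ¬ N.E v w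
    · obtain ⟨x, hx⟩ := (N.isLeaf_iff v).mp h
      exact ⟨x, hx ▸ Relation.ReflTransGen.refl⟩
    · push_neg at h
      obtain ⟨w, hw⟩ := h
      obtain ⟨x, hx⟩ := ih w hw
      exact ⟨x, Relation.ReflTransGen.head hw hx⟩

theorem stmt10 {α V : Type} [Finite α] [Finite V] (N : DAGOn α V)
    (hNet : N.IsNetwork) (t : V → Bool) (G : SimpleGraph α)
    (hex : N.Explains t G) (C' : Set (Set α)) (hne : C'.Nonempty)
    (hsub : ∀ C ∈ C', ∃ v : V, C = N.cluster v)
    (hno : ∀ v : V, ¬ SetsOverlap (⋃₀ C') (N.cluster v)) :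
    IsModule G (⋃₀ C') := by
  constructor
  · obtain ⟨C, hC⟩ := hne
    obtain ⟨v, rfl⟩ := hsub C hC
    obtain ⟨x, hx⟩ := exists_leaf_below N v
    exact ⟨x, N.cluster v, hC, hx⟩
  · intro x hx y hy z hz
    have hxz : x ≠ z := fun h => hz (h ▸ hx)
    have hyz : y ≠ z := fun h => hz (h ▸ hy)
    -- common ancestors of {x,z} and {y,z} coincide
    have key : ∀ x' ∈ ⋃₀ C', ∀ y' ∈ ⋃₀ C', ∀ v : V,
        N.IsCommonAnc v {x', z} → N.IsCommonAnc v {y', z} := by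
      intro x' hx' y' hy' v hv
      have hzc : z ∈ N.cluster v := hv z (by simp)
      have hxc : x' ∈ N.cluster v := hv x' (by simp)
      have hsubM : ⋃₀ C' ⊆ N.cluster v := by
        by_contra hcon
        refine hno v ⟨?_, ?_, ?_⟩
        · exact fun he => Set.eq_empty_iff_forall_notMem.mp he x' ⟨hx', hxc⟩
        · intro he
          exact hcon (fun a ha => ((Set.ext_iff.mp he a).mpr ha).2)
        · intro he
          exact hz ((Set.ext_iff.mp he z).mpr hzc).1
      intro w hw
      rcases hw with rfl | hw
      · exact hsubM hy'
      · simp only [Set.mem_singleton_iff] at hw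
        exact hw ▸ hzc
    have lcaiff : ∀ v : V, N.IsLCA v {x, z} ↔ N.IsLCA v {y, z} := by
      intro v
      constructor
      · rintro ⟨h1, h2⟩
        exact ⟨key x hx y hy v h1, fun u hu => h2 u (key y hy x hx u hu)⟩
      · rintro ⟨h1, h2⟩
        exact ⟨key y hy x hx v h1, fun u hu => h2 u (key x hx y hy u hu)⟩
    rw [hex.2 x z hxz, hex.2 y z hyz]
    constructor
    · rintro ⟨v, h1, h2⟩; exact ⟨v, (lcaiff v).mp h1, h2⟩
    · rintro ⟨v, h1, h2⟩; exact ⟨v, (lcaiff v).mpr h1, h2⟩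
end

section
/- Every near-cograph is level-1 explainable, i.e., can be explained by a 0/1-labeled level-1 network. -/
namespace NCAux


variable {α : Type}

def Reach (R : α → α → Prop) (S : Set α) : α → α → Prop :=
  Relation.ReflTransGen (fun a b => a ∈ S ∧ b ∈ S ∧ R a b)

def Conn (R : α → α → Prop) (S : Set α) : Prop := ∀ x ∈ S, ∀ y ∈ S, Reach R S x y

def NoP4 (R : α → α → Prop) (S : Set α) : Prop :=
  ∀ a b c d, a ∈ S → b ∈ S → c ∈ S → d ∈ S →
    a ≠ b → a ≠ c → a ≠ d → b ≠ c → b ≠ d → c ≠ d →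
    R a b → R b c → R c d → ¬ R a c → ¬ R a d → ¬ R b d → False

theorem noP4_mono {R : α → α → Prop} {S S' : Set α} (hS : S' ⊆ S) (h : NoP4 R S) :
    NoP4 R S' := fun a b c d ha hb hc hd => h a b c d (hS ha) (hS hb) (hS hc) (hS hd)

theorem reach_mono {R R' : α → α → Prop} {S S' : Set α}
    (hR : ∀ a b, R a b → R' a b) (hS : S ⊆ S') {x y : α} (h : Reach R S x y) :
    Reach R' S' x y :=
  Relation.ReflTransGen.mono (fun a b hab => ⟨hS hab.1, hS hab.2.1, hR a b hab.2.2⟩) x y h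

theorem conn_mono {R R' : α → α → Prop} {S : Set α}
    (hR : ∀ a b, R a b → R' a b) (h : Conn R S) : Conn R' S :=
  fun x hx y hy => reach_mono hR (le_refl S) (h x hx y hy)

theorem reach_symm {R : α → α → Prop} (Rsym : Symmetric R) {S : Set α} {x y : α}
    (h : Reach R S x y) : Reach R S y x := by
  induction h with
  | refl => exact Relation.ReflTransGen.refl
  | tail _ e ih => exact Relation.ReflTransGen.head ⟨e.2.1, e.1, Rsym e.2.2⟩ ih

/-- walking towards `v`, the last vertex before `v`. -/
theorem reach_to {R : α → α → Prop} {S : Set α} {x v : α}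
    (h : Reach R S x v) (hne : x ≠ v) :
    ∃ w, Reach R (S \ {v}) x w ∧ w ∈ S ∧ w ≠ v ∧ R w v := by
  induction h using Relation.ReflTransGen.head_induction_on with
  | refl => exact absurd rfl hne
  | head e h ih =>
      rename_i a c
      by_cases hcv : c = v
      · exact ⟨a, Relation.ReflTransGen.refl, e.1, hne, hcv ▸ e.2.2⟩
      · obtain ⟨w, hw1, hw2, hw3, hw4⟩ := ih hcv
        exact ⟨w, Relation.ReflTransGen.head ⟨⟨e.1, hne⟩, ⟨e.2.1, hcv⟩, e.2.2⟩ hw1, hw2, hw3, hw4⟩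

theorem mixed_pair {R : α → α → Prop} {S : Set α} {v u w : α}
    (h : Reach R S u w) (hu : ¬ R v u) (hw : R v w) :
    ∃ x y, x ∈ S ∧ y ∈ S ∧ Reach R S u x ∧ Reach R S u y ∧ R x y ∧ ¬ R v x ∧ R v y := by
  induction h using Relation.ReflTransGen.head_induction_on with
  | refl => exact absurd hw hu
  | head e h ih =>
      rename_i a c
      by_cases hvc : R v c
      · exact ⟨a, c, e.1, e.2.1, Relation.ReflTransGen.refl,
          Relation.ReflTransGen.single e, e.2.2, hu, hvc⟩
      · obtain ⟨x, y, h1, h2, h3, h4, h5, h6, h7⟩ := ih hvc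
        exact ⟨x, y, h1, h2, Relation.ReflTransGen.head e h3,
          Relation.ReflTransGen.head e h4, h5, h6, h7⟩

theorem helper1 {R : α → α → Prop} (Rsym : Symmetric R) (Rirr : ∀ a, ¬ R a a) {S : Set α}
    (hP4 : NoP4 R S) (hconn : Conn R S)
    (hco : Conn (fun a b => a ≠ b ∧ ¬ R a b) S)
    {v : α} (hv : v ∈ S) (hdisc : ¬ Conn R (S \ {v})) : False := by
  -- a non-reachable pair in S \ {v}
  simp only [Conn, not_forall] at hdisc
  obtain ⟨x0, hx0, y0, hy0, hnr⟩ := hdisc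
  -- a non-neighbour u of v
  have hu : ∃ u, u ∈ S ∧ u ≠ v ∧ ¬ R v u := by
    by_contra hall
    push_neg at hall
    rcases Relation.ReflTransGen.cases_head (hco v hv x0 (hx0.1)) with heq | ⟨b, hb, _⟩
    · exact hx0.2 heq.symm
    · exact hb.2.2.2 (hall b hb.2.1 (fun hbv => hb.2.2.1 hbv.symm))
  obtain ⟨u, huS, huv, hvu⟩ := hu
  have huS' : u ∈ S \ {v} := ⟨huS, huv⟩
  -- a vertex c not reachable from u in S \ {v}
  have hc : ∃ c, c ∈ S \ {v} ∧ ¬ Reach R (S \ {v}) u c := by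
    by_cases hux : Reach R (S \ {v}) u x0
    · exact ⟨y0, hy0, fun hr => hnr ((reach_symm Rsym hux).trans hr)⟩
    · exact ⟨x0, hx0, hux⟩
  obtain ⟨c, hcS', hnreach⟩ := hc
  -- v's neighbour w_c in the component of c
  obtain ⟨wc, hwc1, hwc2, hwc3, hwc4⟩ := reach_to (hconn c hcS'.1 v hv) hcS'.2
  -- v's neighbour w_u in the component of u
  obtain ⟨wu, hwu1, _, _, hwu4⟩ := reach_to (hconn u huS v hv) huv
  -- a mixed adjacent pair x y in the component of u
  obtain ⟨x, y, hxS, hyS, hux, huy, hxy, hvx, hvy⟩ := mixed_pair hwu1 hvu (Rsym hwu4)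
  have hwcS' : wc ∈ S \ {v} := ⟨hwc2, hwc3⟩
  -- x, y cannot reach or touch wc
  have hnxwc : ¬ R x wc := fun hr =>
    hnreach ((hux.tail ⟨hxS, hwcS', hr⟩).trans (reach_symm Rsym hwc1))
  have hnywc : ¬ R y wc := fun hr =>
    hnreach ((huy.tail ⟨hyS, hwcS', hr⟩).trans (reach_symm Rsym hwc1))
  have hxwc : x ≠ wc := fun hh =>
    hnreach ((hh ▸ hux).trans (reach_symm Rsym hwc1))
  have hywc : y ≠ wc := fun hh =>
    hnreach ((hh ▸ huy).trans (reach_symm Rsym hwc1))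
  -- assemble the P4 : x - y - v - wc
  exact hP4 x y v wc hxS.1 hyS.1 hv hwc2
    (fun hh => Rirr x (hh ▸ hxy)) hxS.2 hxwc hyS.2 hywc (Ne.symm hwc3)
    hxy (Rsym hvy) (Rsym hwc4)
    (fun hh => hvx (Rsym hh)) hnxwc hnywc


variable {α : Type}

theorem noP4_compl {R : α → α → Prop} (Rsym : Symmetric R) {S : Set α} (h : NoP4 R S) :
    NoP4 (fun a b => a ≠ b ∧ ¬ R a b) S := by
  intro a b c d ha hb hc hd hab hac had hbc hbd hcd e1 e2 e3 n1 n2 n3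
  -- in R : edges ac, ad, bd ; nonedges ab, bc, cd.  P4 : b - d - a - c
  have rac : R a c := by by_contra hr; exact n1 ⟨hac, hr⟩
  have rad : R a d := by by_contra hr; exact n2 ⟨had, hr⟩
  have rbd : R b d := by by_contra hr; exact n3 ⟨hbd, hr⟩
  exact h b d a c hb hd ha hc hbd hab.symm hbc had.symm hcd.symm hac
    rbd (Rsym rad) rac (fun hr => e1.2 (Rsym hr)) e2.2 (fun hr => e3.2 (Rsym hr))

theorem seinsche [Finite α] {R : α → α → Prop} (Rsym : Symmetric R) (Rirr : ∀ a, ¬ R a a) :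
    ∀ (n : ℕ) (S : Set α), S.ncard ≤ n → NoP4 R S → 2 ≤ S.ncard →
      Conn R S → Conn (fun a b => a ≠ b ∧ ¬ R a b) S → False := by
  intro n
  induction n with
  | zero => intro S hle _ h2 _ _; omega
  | succ n ih =>
      intro S hle hP4 h2 hconn hco
      by_cases hcard : S.ncard = 2
      · -- two vertices
        obtain ⟨x, y, hxy, rfl⟩ := Set.ncard_eq_two.mp hcard
        have hx : x ∈ ({x, y} : Set α) := Set.mem_insert _ _
        have hy : y ∈ ({x, y} : Set α) := Set.mem_insert_of_mem _ rfl
        by_cases hR : R x y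
        · rcases Relation.ReflTransGen.cases_head (hco x hx y hy) with heq | ⟨b, hb, _⟩
          · exact hxy heq
          · rcases hb.2.1 with rfl | rfl
            · exact hb.2.2.1 rfl
            · exact hb.2.2.2 hR
        · rcases Relation.ReflTransGen.cases_head (hconn x hx y hy) with heq | ⟨b, hb, _⟩
          · exact hxy heq
          · rcases hb.2.1 with rfl | rfl
            · exact Rirr _ hb.2.2
            · exact hR hb.2.2
      · -- at least three vertices : remove one
        have h3 : 3 ≤ S.ncard := by omega
        have hne : S.Nonempty := by
          apply Set.nonempty_of_ncard_ne_zero; omega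
        obtain ⟨v, hv⟩ := hne
        have hcard' : (S \ {v}).ncard + 1 = S.ncard :=
          Set.ncard_diff_singleton_add_one hv (Set.toFinite S)
        have hsub : S \ {v} ⊆ S := Set.diff_subset
        by_cases h1 : Conn R (S \ {v})
        · by_cases hh2 : Conn (fun a b => a ≠ b ∧ ¬ R a b) (S \ {v})
          · exact ih (S \ {v}) (by omega) (noP4_mono hsub hP4) (by omega) h1 hh2
          · exact helper1 (R := fun a b => a ≠ b ∧ ¬ R a b)
              (fun a b hab => ⟨hab.1.symm, fun hr => hab.2 (Rsym hr)⟩)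
              (fun a hab => hab.1 rfl)
              (noP4_compl Rsym hP4) hco
              (conn_mono (fun a b hab => ⟨fun hh => Rirr _ (hh ▸ hab),
                fun hh => hh.2 hab⟩) hconn)
              hv hh2
        · exact helper1 Rsym Rirr hP4 hconn hco hv h1

theorem conn_split_of_not_conn {R : α → α → Prop} {S : Set α} (hdisc : ¬ Conn R S) :
    ∃ T, T ⊆ S ∧ T.Nonempty ∧ (S \ T).Nonempty ∧ ∀ x ∈ T, ∀ y ∈ S \ T, ¬ R x y := by
  simp only [Conn, not_forall] at hdisc
  obtain ⟨x0, hx0, y0, hy0, hnr⟩ := hdisc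
  refine ⟨{y | y ∈ S ∧ Reach R S x0 y}, fun y hy => hy.1,
    ⟨x0, hx0, Relation.ReflTransGen.refl⟩, ⟨y0, hy0, fun hy => hnr hy.2⟩, ?_⟩
  intro x hx y hy hR
  exact hy.2 ⟨hy.1, hx.2.tail ⟨hx.1, hy.1, hR⟩⟩

theorem cograph_split [Finite α] {R : α → α → Prop} (Rsym : Symmetric R)
    (Rirr : ∀ a, ¬ R a a) {S : Set α} (hP4 : NoP4 R S) (h2 : 2 ≤ S.ncard) :
    ∃ T b, T ⊆ S ∧ T.Nonempty ∧ (S \ T).Nonempty ∧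
      ∀ x ∈ T, ∀ y ∈ S \ T, (R x y ↔ b = true) := by
  by_cases h1 : Conn R S
  · by_cases hh2 : Conn (fun a b => a ≠ b ∧ ¬ R a b) S
    · exact absurd (seinsche Rsym Rirr S.ncard S le_rfl hP4 h2 h1 hh2) not_false
    · obtain ⟨T, hT1, hT2, hT3, hT4⟩ := conn_split_of_not_conn hh2
      refine ⟨T, true, hT1, hT2, hT3, fun x hx y hy => ⟨fun _ => rfl, fun _ => ?_⟩⟩
      by_contra hR
      exact hT4 x hx y hy ⟨fun hh => hy.2 (hh ▸ hx), hR⟩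
  · obtain ⟨T, hT1, hT2, hT3, hT4⟩ := conn_split_of_not_conn h1
    exact ⟨T, false, hT1, hT2, hT3, fun x hx y hy =>
      ⟨fun hR => absurd hR (hT4 x hx y hy), fun hb => absurd hb (by simp)⟩⟩


variable {α : Type}

open Classical in
theorem family_exists [Finite α] (G : SimpleGraph α) :
    ∀ (n : ℕ) (S : Set α), S.ncard ≤ n → S.Nonempty → NoP4 G.Adj S →
    ∃ (F : Set (Set α)) (ℓ : Set α → Bool),
      (∀ A ∈ F, A ⊆ S ∧ A.Nonempty) ∧ S ∈ F ∧ (∀ x ∈ S, {x} ∈ F) ∧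
      (∀ A ∈ F, ∀ B ∈ F, A ⊆ B ∨ B ⊆ A ∨ A ∩ B = ∅) ∧
      (∀ x ∈ S, ∀ y ∈ S, ∃ A ∈ F, x ∈ A ∧ y ∈ A ∧ ∀ B ∈ F, x ∈ B → y ∈ B → A ⊆ B) ∧
      (∀ x ∈ S, ∀ y ∈ S, x ≠ y → ∀ A ∈ F, x ∈ A → y ∈ A →
        (∀ B ∈ F, x ∈ B → y ∈ B → A ⊆ B) → (G.Adj x y ↔ ℓ A = true)) := by
  intro n
  induction n with
  | zero =>
      intro S hle hne _
      have := Set.ncard_pos (Set.toFinite S) |>.mpr hne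
      omega
  | succ n ih =>
      intro S hle hne hP4
      by_cases h2 : 2 ≤ S.ncard
      · -- split case
        obtain ⟨T, b, hT1, hT2, hT3, hcross⟩ :=
          cograph_split (fun a b h => h.symm) (fun a => G.irrefl) hP4 h2
        have hTssub : T ⊂ S := by
          obtain ⟨y0, hy0⟩ := hT3
          exact ⟨hT1, fun hST => hy0.2 (hST hy0.1)⟩
        have hT2ssub : S \ T ⊂ S := by
          obtain ⟨x0, hx0⟩ := hT2
          exact ⟨Set.diff_subset, fun hST => (hST (hT1 hx0)).2 hx0⟩
        have hc1 : T.ncard < S.ncard := Set.ncard_lt_ncard hTssub (Set.toFinite S)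
        have hc2 : (S \ T).ncard < S.ncard := Set.ncard_lt_ncard hT2ssub (Set.toFinite S)
        obtain ⟨F₁, ℓ₁, P1, P2, P3, P4, P5, P6⟩ :=
          ih T (by omega) hT2 (noP4_mono hT1 hP4)
        obtain ⟨F₂, ℓ₂, Q1, Q2, Q3, Q4, Q5, Q6⟩ :=
          ih (S \ T) (by omega) hT3 (noP4_mono Set.diff_subset hP4)
        have hF1T : ∀ A ∈ F₁, A ⊆ T := fun A hA => (P1 A hA).1
        have hF2T : ∀ A ∈ F₂, A ⊆ S \ T := fun A hA => (Q1 A hA).1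
        have hSnotF1 : S ∉ F₁ := by
          intro hmem
          obtain ⟨y0, hy0⟩ := hT3
          exact hy0.2 (hF1T S hmem hy0.1)
        have hSnotF2 : S ∉ F₂ := by
          intro hmem
          obtain ⟨x0, hx0⟩ := hT2
          exact (hF2T S hmem (hT1 hx0)).2 hx0
        refine ⟨insert S (F₁ ∪ F₂),
          fun A => if A = S then b else if A ∈ F₁ then ℓ₁ A else ℓ₂ A,
          ?_, Set.mem_insert _ _, ?_, ?_, ?_, ?_⟩
        · rintro A (rfl | hA | hA)
          · exact ⟨le_refl _, hne⟩
          · exact ⟨(hF1T A hA).trans hT1, (P1 A hA).2⟩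
          · exact ⟨(hF2T A hA).trans Set.diff_subset, (Q1 A hA).2⟩
        · intro x hx
          by_cases hxT : x ∈ T
          · exact Set.mem_insert_of_mem _ (Or.inl (P3 x hxT))
          · exact Set.mem_insert_of_mem _ (Or.inr (Q3 x ⟨hx, hxT⟩))
        · -- laminar
          rintro A (rfl | hA | hA) B hB
          · rcases hB with rfl | hB | hB
            · exact Or.inl (le_refl _)
            · exact Or.inr (Or.inl ((hF1T B hB).trans hT1))
            · exact Or.inr (Or.inl ((hF2T B hB).trans Set.diff_subset))
          · rcases hB with rfl | hB | hB
            · exact Or.inl ((hF1T A hA).trans hT1)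
            · exact P4 A hA B hB
            · refine Or.inr (Or.inr (Set.eq_empty_iff_forall_notMem.mpr ?_))
              rintro z ⟨hz1, hz2⟩
              exact (hF2T B hB hz2).2 (hF1T A hA hz1)
          · rcases hB with rfl | hB | hB
            · exact Or.inl ((hF2T A hA).trans Set.diff_subset)
            · refine Or.inr (Or.inr (Set.eq_empty_iff_forall_notMem.mpr ?_))
              rintro z ⟨hz1, hz2⟩
              exact (hF2T A hA hz1).2 (hF1T B hB hz2)
            · exact Q4 A hA B hB
        · -- least containers
          intro x hx y hy
          by_cases hxT : x ∈ T <;> by_cases hyT : y ∈ T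
          · obtain ⟨A, hA, hxA, hyA, hmin⟩ := P5 x hxT y hyT
            refine ⟨A, Set.mem_insert_of_mem _ (Or.inl hA), hxA, hyA, ?_⟩
            rintro B (rfl | hB | hB) hxB hyB
            · exact (hF1T A hA).trans hT1
            · exact hmin B hB hxB hyB
            · exact absurd (hF2T B hB hxB).2 (fun h => h hxT)
          · refine ⟨S, Set.mem_insert _ _, hx, hy, ?_⟩
            rintro B (rfl | hB | hB) hxB hyB
            · exact le_refl _
            · exact absurd (hF1T B hB hyB) (fun h => hyT h)
            · exact absurd (hF2T B hB hxB).2 (fun h => h hxT)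
          · refine ⟨S, Set.mem_insert _ _, hx, hy, ?_⟩
            rintro B (rfl | hB | hB) hxB hyB
            · exact le_refl _
            · exact absurd (hF1T B hB hxB) (fun h => hxT h)
            · exact absurd (hF2T B hB hyB).2 (fun h => h hyT)
          · obtain ⟨A, hA, hxA, hyA, hmin⟩ := Q5 x ⟨hx, hxT⟩ y ⟨hy, hyT⟩
            refine ⟨A, Set.mem_insert_of_mem _ (Or.inr hA), hxA, hyA, ?_⟩
            rintro B (rfl | hB | hB) hxB hyB
            · exact (hF2T A hA).trans Set.diff_subset
            · exact absurd (hF1T B hB hxB) (fun h => hxT h)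
            · exact hmin B hB hxB hyB
        · -- labels
          intro x hx y hy hxy A hAF hxA hyA hminA
          by_cases hxT : x ∈ T <;> by_cases hyT : y ∈ T
          · -- both in T : A is in F₁
            obtain ⟨A₁, hA₁, hxA₁, hyA₁, hmin₁⟩ := P5 x hxT y hyT
            have hAsub : A ⊆ A₁ :=
              hminA A₁ (Set.mem_insert_of_mem _ (Or.inl hA₁)) hxA₁ hyA₁
            have hAF1 : A ∈ F₁ := by
              rcases hAF with rfl | hA | hA
              · obtain ⟨y0, hy0⟩ := hT3
                exact absurd (hF1T A₁ hA₁ (hAsub hy0.1)) hy0.2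
              · exact hA
              · exact absurd (hF2T A hA hxA).2 (fun h => h hxT)
            have hAS : A ≠ S := fun h => hSnotF1 (h ▸ hAF1)
            beta_reduce
            rw [if_neg hAS, if_pos hAF1]
            exact P6 x hxT y hyT hxy A hAF1 hxA hyA
              (fun B hB hxB hyB => hminA B (Set.mem_insert_of_mem _ (Or.inl hB)) hxB hyB)
          · -- x ∈ T, y ∉ T : A = S
            have hAS : A = S := by
              rcases hAF with rfl | hA | hA
              · rfl
              · exact absurd (hF1T A hA hyA) (fun h => hyT h)
              · exact absurd (hF2T A hA hxA).2 (fun h => h hxT)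
            beta_reduce
            rw [if_pos hAS]
            exact hcross x hxT y ⟨hy, hyT⟩
          · -- y ∈ T, x ∉ T : A = S
            have hAS : A = S := by
              rcases hAF with rfl | hA | hA
              · rfl
              · exact absurd (hF1T A hA hxA) (fun h => hxT h)
              · exact absurd (hF2T A hA hyA).2 (fun h => h hyT)
            beta_reduce
            rw [if_pos hAS]
            rw [G.adj_comm]
            exact hcross y hyT x ⟨hx, hxT⟩
          · -- both outside T : A ∈ F₂
            obtain ⟨A₂, hA₂, hxA₂, hyA₂, hmin₂⟩ := Q5 x ⟨hx, hxT⟩ y ⟨hy, hyT⟩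
            have hAsub : A ⊆ A₂ :=
              hminA A₂ (Set.mem_insert_of_mem _ (Or.inr hA₂)) hxA₂ hyA₂
            have hAF2 : A ∈ F₂ := by
              rcases hAF with rfl | hA | hA
              · obtain ⟨x0, hx0⟩ := hT2
                exact absurd (hF2T A₂ hA₂ (hAsub (hT1 hx0))).2 (fun h => h hx0)
              · exact absurd (hF1T A hA hxA) (fun h => hxT h)
              · exact hA
            have hAS : A ≠ S := fun h => hSnotF2 (h ▸ hAF2)
            have hAnF1 : A ∉ F₁ := by
              intro hA
              exact absurd (hF1T A hA hxA) (fun h => hxT h)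
            beta_reduce
            rw [if_neg hAS, if_neg hAnF1]
            exact Q6 x ⟨hx, hxT⟩ y ⟨hy, hyT⟩ hxy A hAF2 hxA hyA
              (fun B hB hxB hyB => hminA B (Set.mem_insert_of_mem _ (Or.inr hB)) hxB hyB)
      · -- singleton case
        have h1 : S.ncard = 1 := by
          have := Set.ncard_pos (Set.toFinite S) |>.mpr hne
          omega
        obtain ⟨a, rfl⟩ := Set.ncard_eq_one.mp h1
        refine ⟨{{a}}, fun _ => false, ?_, rfl, ?_, ?_, ?_, ?_⟩
        · intro A hA
          rw [Set.mem_singleton_iff] at hA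
          subst hA
          exact ⟨le_refl _, ⟨a, rfl⟩⟩
        · intro x hx
          rw [Set.mem_singleton_iff] at hx
          subst hx
          rfl
        · intro A hA B hB
          rw [Set.mem_singleton_iff] at hA hB
          subst hA; subst hB
          exact Or.inl (le_refl _)
        · intro x hx y hy
          refine ⟨{a}, rfl, hx, hy, fun B hB _ _ => ?_⟩
          rw [Set.mem_singleton_iff] at hB
          subst hB
          exact le_refl _
        · intro x hx y hy hxy
          rw [Set.mem_singleton_iff] at hx hy
          exact absurd (hx.trans hy.symm) hxy


variable {α : Type}

/-! ### The network for a near-cograph -/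

/-- Vertex type: internal tree vertices (members of the laminar family `F`),
"spike" vertices (one per non-`v` leaf), and the leaves themselves. -/
def VT (α : Type) (v : α) (F : Set (Set α)) : Type :=
  {A : Set α // A ∈ F} ⊕ ({x : α // x ≠ v} ⊕ α)

def lf (v : α) (F : Set (Set α)) (a : α) : VT α v F := Sum.inr (Sum.inr a)

def sp (v : α) (F : Set (Set α)) (x : {x : α // x ≠ v}) : VT α v F := Sum.inr (Sum.inl x)

instance {α : Type} [Finite α] {v : α} {F : Set (Set α)} : Finite (VT α v F) :=
  inferInstanceAs (Finite ({A : Set α // A ∈ F} ⊕ ({x : α // x ≠ v} ⊕ α)))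

/-- The edge relation of the network. -/
def Ed (v : α) (F : Set (Set α)) : VT α v F → VT α v F → Prop
  | Sum.inl A, Sum.inl B => B.1 ⊂ A.1 ∧ ∀ C ∈ F, B.1 ⊆ C → C ⊂ A.1 → C ⊆ B.1
  | Sum.inl A, Sum.inr (Sum.inl x) => A.1 = {x.1}
  | Sum.inr (Sum.inl x), Sum.inr (Sum.inr y) => y = x.1 ∨ y = v
  | _, _ => False

/-- The hypotheses on the laminar family `F` with labelling `ℓ`. -/
structure Good (G : SimpleGraph α) (v : α) (F : Set (Set α)) (ℓ : Set α → Bool) : Prop where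
  sub : ∀ A ∈ F, A ⊆ {u : α | u ≠ v} ∧ A.Nonempty
  univF : {u : α | u ≠ v} ∈ F
  single : ∀ x : α, x ≠ v → {x} ∈ F
  lam : ∀ A ∈ F, ∀ B ∈ F, A ⊆ B ∨ B ⊆ A ∨ A ∩ B = ∅
  least : ∀ x y : α, x ≠ v → y ≠ v →
    ∃ A ∈ F, x ∈ A ∧ y ∈ A ∧ ∀ B ∈ F, x ∈ B → y ∈ B → A ⊆ B
  lab : ∀ x y : α, x ≠ v → y ≠ v → x ≠ y → ∀ A ∈ F, x ∈ A → y ∈ A →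
    (∀ B ∈ F, x ∈ B → y ∈ B → A ⊆ B) → (G.Adj x y ↔ ℓ A = true)

variable {G : SimpleGraph α} {v : α} {F : Set (Set α)} {ℓ : Set α → Bool}

noncomputable def rnk : VT α v F → ℕ
  | Sum.inl A => A.1.ncard + 2
  | Sum.inr (Sum.inl _) => 1
  | Sum.inr (Sum.inr _) => 0

theorem ed_rank [Finite α] {a b : VT α v F} (h : Ed v F a b) : rnk b < rnk a := by
  rcases a with A | x | s
  · rcases b with B | y | t
    · have := Set.ncard_lt_ncard h.1 (Set.toFinite A.1)
      simp only [rnk]; omega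
    · simp only [rnk]; omega
    · exact h.elim
  · rcases b with B | y | t
    · exact h.elim
    · exact h.elim
    · simp only [rnk]; omega
  · rcases b with B | y | t <;> exact h.elim

theorem ed_acyclic [Finite α] (u : VT α v F) : ¬ Relation.TransGen (Ed v F) u u := by
  intro h
  have key : ∀ {a b : VT α v F}, Relation.TransGen (Ed v F) a b → rnk b < rnk a := by
    intro a b h
    induction h with
    | single e => exact ed_rank e
    | tail _ e ih => exact lt_trans (ed_rank e) ih
  exact lt_irrefl _ (key h)

theorem exists_out [Finite α] (good : Good G v F ℓ) (A : {A : Set α // A ∈ F}) :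
    ∃ w, Ed v F (Sum.inl A) w := by
  obtain ⟨hsub, hne⟩ := good.sub A.1 A.2
  by_cases h1 : A.1.ncard = 1
  · obtain ⟨x, hx⟩ := Set.ncard_eq_one.mp h1
    have hxv : x ≠ v := hsub (hx ▸ rfl)
    exact ⟨sp v F ⟨x, hxv⟩, hx⟩
  · obtain ⟨x, hx⟩ := hne
    have hxv : x ≠ v := hsub hx
    have hssub : {x} ⊂ A.1 := by
      refine ⟨Set.singleton_subset_iff.mpr hx, fun hcon => h1 ?_⟩
      have hEq : A.1 = {x} := le_antisymm hcon (Set.singleton_subset_iff.mpr hx)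
      rw [hEq]; exact Set.ncard_singleton x
    obtain ⟨B, hBmem, hBmax⟩ := Set.Finite.exists_maximalFor id
      {C | C ∈ F ∧ x ∈ C ∧ C ⊂ A.1} (Set.toFinite _)
      ⟨{x}, good.single x hxv, rfl, hssub⟩
    refine ⟨Sum.inl ⟨B, hBmem.1⟩, hBmem.2.2, ?_⟩
    intro C hC hBC hCA
    exact hBmax ⟨hC, hBC hBmem.2.1, hCA⟩ hBC

theorem exists_in [Finite α] (good : Good G v F ℓ) (w : VT α v F)
    (hw : w ≠ Sum.inl ⟨{u : α | u ≠ v}, good.univF⟩) : ∃ u, Ed v F u w := by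
  rcases w with A | x | a
  · have hAne : A.1 ≠ {u : α | u ≠ v} := by
      intro h
      exact hw (congrArg Sum.inl (Subtype.ext h))
    have hAss : A.1 ⊂ {u : α | u ≠ v} := ⟨(good.sub A.1 A.2).1,
      fun hcon => hAne (le_antisymm (good.sub A.1 A.2).1 hcon)⟩
    obtain ⟨B, hBmem, hBmin⟩ := Set.Finite.exists_minimalFor id
      {C | C ∈ F ∧ A.1 ⊂ C} (Set.toFinite _) ⟨{u : α | u ≠ v}, good.univF, hAss⟩
    refine ⟨Sum.inl ⟨B, hBmem.1⟩, hBmem.2, ?_⟩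
    intro C hC hAC hCB
    by_cases hCA : C = A.1
    · exact le_of_eq hCA
    · exfalso
      have hmem : C ∈ {C | C ∈ F ∧ A.1 ⊂ C} :=
        ⟨hC, ssubset_of_subset_of_ne hAC (fun h => hCA h.symm)⟩
      have hCB' : C ≠ B := ne_of_ssubset hCB
      exact hCB' (le_antisymm hCB.subset (hBmin hmem hCB.subset))
  · exact ⟨Sum.inl ⟨{x.1}, good.single x.1 x.2⟩, rfl⟩
  · by_cases hav : a = v
    · obtain ⟨x0, hx0⟩ := (good.sub _ good.univF).2
      exact ⟨sp v F ⟨x0, hx0⟩, Or.inr hav⟩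
    · exact ⟨sp v F ⟨a, hav⟩, Or.inl rfl⟩

/-- Chains along the laminar family. -/
theorem chain [Finite α] (good : Good G v F ℓ) :
    ∀ (n : ℕ) (A B : Set α) (hA : A ∈ F) (hB : B ∈ F), B ⊆ A → A.ncard ≤ n →
      Relation.ReflTransGen (Ed v F) (Sum.inl ⟨A, hA⟩) (Sum.inl ⟨B, hB⟩) := by
  intro n
  induction n with
  | zero =>
      intro A B hA hB hsub hle
      have h1 := (good.sub A hA).2
      have h2 := Set.ncard_pos (Set.toFinite A) |>.mpr h1
      omega
  | succ n ih =>
      intro A B hA hB hsub hle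
      by_cases heq : B = A
      · subst heq
        exact Relation.ReflTransGen.refl
      · have hss : B ⊂ A := ⟨hsub, fun h => heq (le_antisymm hsub h)⟩
        obtain ⟨C, hCmem, hCmax⟩ := Set.Finite.exists_maximalFor id
          {C | C ∈ F ∧ B ⊆ C ∧ C ⊂ A} (Set.toFinite _) ⟨B, hB, le_refl _, hss⟩
        have hedge : Ed v F (Sum.inl ⟨A, hA⟩) (Sum.inl ⟨C, hCmem.1⟩) := by
          refine ⟨hCmem.2.2, ?_⟩
          intro D hD hCD hDA
          exact hCmax ⟨hD, hCmem.2.1.trans hCD, hDA⟩ hCD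
        have hcard : C.ncard ≤ n := by
          have := Set.ncard_lt_ncard hCmem.2.2 (Set.toFinite A)
          omega
        exact Relation.ReflTransGen.head hedge (ih C B hCmem.1 hB hCmem.2.1 hcard)

theorem below_sp [Finite α] (good : Good G v F ℓ) {A : Set α} (hA : A ∈ F)
    {x : {x : α // x ≠ v}} (hx : x.1 ∈ A) :
    Relation.ReflTransGen (Ed v F) (Sum.inl ⟨A, hA⟩) (sp v F x) := by
  have h1 := chain good A.ncard A {x.1} hA (good.single x.1 x.2)
    (Set.singleton_subset_iff.mpr hx) le_rfl
  exact h1.tail rfl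

theorem below_lf [Finite α] (good : Good G v F ℓ) {A : Set α} (hA : A ∈ F)
    {x : α} (hx : x ∈ A) :
    Relation.ReflTransGen (Ed v F) (Sum.inl ⟨A, hA⟩) (lf v F x) := by
  have hxv : x ≠ v := (good.sub A hA).1 hx
  exact (below_sp good hA (x := ⟨x, hxv⟩) hx).tail (Or.inl rfl)

theorem below_lfv [Finite α] (good : Good G v F ℓ) {A : Set α} (hA : A ∈ F) :
    Relation.ReflTransGen (Ed v F) (Sum.inl ⟨A, hA⟩) (lf v F v) := by
  obtain ⟨x, hx⟩ := (good.sub A hA).2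
  have hxv : x ≠ v := (good.sub A hA).1 hx
  exact (below_sp good hA (x := ⟨x, hxv⟩) hx).tail (Or.inr rfl)

/-! descendants -/

theorem desc_lf {a : α} {u : VT α v F}
    (h : Relation.ReflTransGen (Ed v F) (lf v F a) u) : u = lf v F a := by
  rcases Relation.ReflTransGen.cases_head h with rfl | ⟨b, hb, _⟩
  · rfl
  · rcases b with B | y | t <;> exact hb.elim

theorem desc_sp {x : {x : α // x ≠ v}} {u : VT α v F}
    (h : Relation.ReflTransGen (Ed v F) (sp v F x) u) :
    u = sp v F x ∨ u = lf v F x.1 ∨ u = lf v F v := by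
  rcases Relation.ReflTransGen.cases_head h with rfl | ⟨b, hb, h'⟩
  · exact Or.inl rfl
  · rcases b with B | y | t
    · exact hb.elim
    · exact hb.elim
    · have ht := desc_lf h'
      rcases hb with rfl | rfl
      · exact Or.inr (Or.inl ht)
      · exact Or.inr (Or.inr ht)

theorem desc_inl {A : {A : Set α // A ∈ F}} {u : VT α v F}
    (h : Relation.ReflTransGen (Ed v F) (Sum.inl A) u) :
    (∃ B : {A : Set α // A ∈ F}, u = Sum.inl B ∧ B.1 ⊆ A.1) ∨
    (∃ x, u = sp v F x ∧ x.1 ∈ A.1) ∨ (∃ a, u = lf v F a ∧ (a ∈ A.1 ∨ a = v)) := by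
  induction h with
  | refl => exact Or.inl ⟨A, rfl, le_refl _⟩
  | tail h e ih =>
      rename_i b c
      rcases ih with ⟨B, rfl, hB⟩ | ⟨x, rfl, hx⟩ | ⟨a, rfl, ha⟩
      · rcases c with C | y | t
        · exact Or.inl ⟨C, rfl, e.1.subset.trans hB⟩
        · exact Or.inr (Or.inl ⟨y, rfl, hB (by rw [e]; exact rfl)⟩)
        · exact e.elim
      · rcases c with C | y | t
        · exact e.elim
        · exact e.elim
        · rcases e with rfl | rfl
          · exact Or.inr (Or.inr ⟨_, rfl, Or.inl hx⟩)
          · exact Or.inr (Or.inr ⟨_, rfl, Or.inr rfl⟩)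
      · rcases c with C | y | t <;> exact e.elim

/-- The network. -/
def mkN [Finite α] (good : Good G v F ℓ) : DAGOn α (VT α v F) where
  E := Ed v F
  acyclic := ed_acyclic
  leaf := lf v F
  leaf_inj := fun a b h => Sum.inr_injective (Sum.inr_injective h)
  isLeaf_iff := by
    intro u
    constructor
    · intro h
      rcases u with A | x | a
      · exact absurd (exists_out good A) (not_exists.mpr h)
      · exact absurd (Or.inl rfl : Ed v F (sp v F x) (lf v F x.1)) (h (lf v F x.1))
      · exact ⟨a, rfl⟩
    · rintro ⟨a, rfl⟩ w hw
      rcases w with B | y | t <;> exact hw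


variable {α : Type} {G : SimpleGraph α} {v : α} {F : Set (Set α)} {ℓ : Set α → Bool}

theorem ca_iff [Finite α] (good : Good G v F ℓ) (u : VT α v F) (x y : α) :
    (mkN good).IsCommonAnc u {x, y} ↔
      Relation.ReflTransGen (Ed v F) u (lf v F x) ∧
        Relation.ReflTransGen (Ed v F) u (lf v F y) := by
  constructor
  · intro h
    exact ⟨h x (Set.mem_insert _ _), h y (Set.mem_insert_of_mem _ rfl)⟩
  · rintro ⟨h1, h2⟩ z hz
    rcases hz with rfl | hz
    · exact h1
    · rw [Set.mem_singleton_iff] at hz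
      subst hz
      exact h2

theorem mem_of_below_lf [Finite α] {B : {A : Set α // A ∈ F}} {x : α} (hx : x ≠ v)
    (h : Relation.ReflTransGen (Ed v F) (Sum.inl B) (lf v F x)) : x ∈ B.1 := by
  rcases desc_inl h with ⟨B', hB', _⟩ | ⟨z, hz, _⟩ | ⟨a, ha, hmem⟩
  · exact absurd hB' (by simp [lf])
  · exfalso; injection hz with h'; injection h'
  · have hax : x = a := Sum.inr_injective (Sum.inr_injective ha)
    subst hax
    rcases hmem with hmem | rfl
    · exact hmem
    · exact absurd rfl hx

/-- classification of common ancestors of two distinct non-`v` leaves -/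
theorem ca_class [Finite α] (good : Good G v F ℓ) {x y : α} (hx : x ≠ v) (hy : y ≠ v)
    (hxy : x ≠ y) (u : VT α v F) (hu : (mkN good).IsCommonAnc u {x, y}) :
    ∃ B : {A : Set α // A ∈ F}, u = Sum.inl B ∧ x ∈ B.1 ∧ y ∈ B.1 := by
  obtain ⟨h1, h2⟩ := (ca_iff good u x y).mp hu
  rcases u with B | z | a
  · exact ⟨B, rfl, mem_of_below_lf hx h1, mem_of_below_lf hy h2⟩
  · exfalso
    have hx' : x = z.1 := by
      rcases desc_sp h1 with h | h | h
      · exfalso; injection h with h'; injection h'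
      · exact Sum.inr_injective (Sum.inr_injective h)
      · exact absurd (Sum.inr_injective (Sum.inr_injective h) : x = v) hx
    have hy' : y = z.1 := by
      rcases desc_sp h2 with h | h | h
      · exfalso; injection h with h'; injection h'
      · exact Sum.inr_injective (Sum.inr_injective h)
      · exact absurd (Sum.inr_injective (Sum.inr_injective h) : y = v) hy
    exact hxy (hx'.trans hy'.symm)
  · exfalso
    have hxa : x = a := Sum.inr_injective (Sum.inr_injective (desc_lf h1))
    have hya : y = a := Sum.inr_injective (Sum.inr_injective (desc_lf h2))
    exact hxy (hxa.trans hya.symm)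

theorem lca_xy [Finite α] (good : Good G v F ℓ) {x y : α} (hx : x ≠ v) (hy : y ≠ v)
    (hxy : x ≠ y) {M : Set α} (hM : M ∈ F) (hxM : x ∈ M) (hyM : y ∈ M)
    (hmin : ∀ B ∈ F, x ∈ B → y ∈ B → M ⊆ B) :
    (mkN good).IsLCA (Sum.inl ⟨M, hM⟩) {x, y} ∧
      ∀ u, (mkN good).IsLCA u {x, y} → u = Sum.inl ⟨M, hM⟩ := by
  have hCA : (mkN good).IsCommonAnc (Sum.inl ⟨M, hM⟩) {x, y} :=
    (ca_iff good _ x y).mpr ⟨below_lf good hM hxM, below_lf good hM hyM⟩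
  constructor
  · refine ⟨hCA, ?_⟩
    intro u hu hb
    obtain ⟨B, rfl, hxB, hyB⟩ := ca_class good hx hy hxy u hu
    rcases desc_inl hb with ⟨B', heq, hsub⟩ | ⟨z, hz, _⟩ | ⟨a, ha, _⟩
    · have hBB : (B : {A : Set α // A ∈ F}) = B' := Sum.inl_injective heq
      subst hBB
      have hMB : M ⊆ B.1 := hmin B.1 B.2 hxB hyB
      exact congrArg Sum.inl (Subtype.ext (le_antisymm hsub hMB))
    · exact absurd hz (by simp [sp])
    · exact absurd ha (by simp [lf])
  · intro u hu
    obtain ⟨B, rfl, hxB, hyB⟩ := ca_class good hx hy hxy u hu.1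
    have hbel : Relation.ReflTransGen (Ed v F) (Sum.inl B) (Sum.inl ⟨M, hM⟩) :=
      chain good B.1.ncard B.1 M B.2 hM (hmin B.1 B.2 hxB hyB) le_rfl
    exact (hu.2 (Sum.inl ⟨M, hM⟩) hCA hbel).symm

theorem lca_xv [Finite α] (good : Good G v F ℓ) {x : α} (hx : x ≠ v) :
    (mkN good).IsLCA (sp v F ⟨x, hx⟩) {x, v} ∧
      ∀ u, (mkN good).IsLCA u {x, v} → u = sp v F ⟨x, hx⟩ := by
  have hCA : (mkN good).IsCommonAnc (sp v F ⟨x, hx⟩) {x, v} :=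
    (ca_iff good _ x v).mpr ⟨Relation.ReflTransGen.single (Or.inl rfl),
      Relation.ReflTransGen.single (Or.inr rfl)⟩
  constructor
  · refine ⟨hCA, ?_⟩
    intro u hu hb
    obtain ⟨h1, h2⟩ := (ca_iff good u x v).mp hu
    rcases desc_sp hb with rfl | rfl | rfl
    · rfl
    · exact absurd (Sum.inr_injective (Sum.inr_injective (desc_lf h2)) : v = x) (Ne.symm hx)
    · exact absurd (Sum.inr_injective (Sum.inr_injective (desc_lf h1)) : x = v) hx
  · intro u hu
    obtain ⟨h1, h2⟩ := (ca_iff good u x v).mp hu.1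
    rcases u with B | z | a
    · have hxB : x ∈ B.1 := mem_of_below_lf hx h1
      have hbel : Relation.ReflTransGen (Ed v F) (Sum.inl B) (sp v F ⟨x, hx⟩) :=
        below_sp good B.2 hxB
      exact (hu.2 (sp v F ⟨x, hx⟩) hCA hbel).symm
    · have hx' : x = z.1 := by
        rcases desc_sp h1 with h | h | h
        · exfalso; injection h with h'; injection h'
        · exact Sum.inr_injective (Sum.inr_injective h)
        · exact absurd (Sum.inr_injective (Sum.inr_injective h) : x = v) hx
      have hz : z = ⟨x, hx⟩ := Subtype.ext hx'.symm
      exact congrArg (sp v F) hz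
    · exfalso
      have ha1 : x = a := Sum.inr_injective (Sum.inr_injective (desc_lf h1))
      have ha2 : v = a := Sum.inr_injective (Sum.inr_injective (desc_lf h2))
      exact hx (ha1.trans ha2.symm)

theorem lca_xx [Finite α] (good : Good G v F ℓ) (x : α) :
    (mkN good).IsLCA (lf v F x) {x, x} ∧
      ∀ u, (mkN good).IsLCA u {x, x} → u = lf v F x := by
  have hCA : (mkN good).IsCommonAnc (lf v F x) {x, x} :=
    (ca_iff good _ x x).mpr ⟨Relation.ReflTransGen.refl, Relation.ReflTransGen.refl⟩
  constructor
  · exact ⟨hCA, fun u _ hb => desc_lf hb⟩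
  · intro u hu
    have h1 := ((ca_iff good u x x).mp hu.1).1
    exact (hu.2 (lf v F x) hCA h1).symm

theorem hybrid_eq [Finite α] (good : Good G v F ℓ) (u : VT α v F)
    (h : (mkN good).IsHybrid u) : u = lf v F v := by
  obtain ⟨p, q, hpq, hp, hq⟩ := h
  rcases u with B | z | a
  · exfalso
    have key : ∀ P Q : {A : Set α // A ∈ F}, Ed v F (Sum.inl P) (Sum.inl B) →
        Ed v F (Sum.inl Q) (Sum.inl B) → P.1 ⊆ Q.1 → P = Q := by
      intro P Q hP hQ hsub
      by_cases heq : P.1 = Q.1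
      · exact Subtype.ext heq
      · exfalso
        have hPQ : P.1 ⊂ Q.1 := ⟨hsub, fun hc => heq (le_antisymm hsub hc)⟩
        exact hP.1.not_subset (hQ.2 P.1 P.2 hP.1.subset hPQ)
    rcases p with P | pz | pa
    · rcases q with Q | qz | qa
      · obtain ⟨x0, hx0⟩ := (good.sub B.1 B.2).2
        rcases good.lam P.1 P.2 Q.1 Q.2 with hsub | hsub | hdisj
        · exact hpq (congrArg Sum.inl (key P Q hp hq hsub))
        · exact hpq (congrArg Sum.inl (key Q P hq hp hsub)).symm
        · have hmem : x0 ∈ P.1 ∩ Q.1 := ⟨hp.1.subset hx0, hq.1.subset hx0⟩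
          rw [hdisj] at hmem
          exact hmem
      · exact hq.elim
      · exact hq.elim
    · exact hp.elim
    · exact hp.elim
  · exfalso
    rcases p with P | pz | pa
    · rcases q with Q | qz | qa
      · exact hpq (congrArg Sum.inl (Subtype.ext (hp.trans hq.symm)))
      · exact hq.elim
      · exact hq.elim
    · exact hp.elim
    · exact hp.elim
  · by_cases hav : a = v
    · rw [hav]; rfl
    · exfalso
      rcases p with P | pz | pa
      · exact hp.elim
      · rcases q with Q | qz | qa
        · exact hq.elim
        · have hp' : pz.1 = a := by
            rcases hp with h | h
            · exact h.symm
            · exact absurd h hav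
          have hq' : qz.1 = a := by
            rcases hq with h | h
            · exact h.symm
            · exact absurd h hav
          exact hpq (congrArg (fun t => sp v F t) (Subtype.ext (hp'.trans hq'.symm)))
        · exact hq.elim
      · exact hp.elim

theorem level_one [Finite α] (good : Good G v F ℓ) : (mkN good).IsLevel 1 := by
  intro B _
  have hsub : {w | w ∈ B ∧ (mkN good).IsHybrid w ∧ ¬ (mkN good).MaxIn B w}
      ⊆ {lf v F v} := fun w hw => hybrid_eq good w hw.2.1
  refine le_trans (Set.ncard_le_ncard hsub (Set.toFinite _)) ?_
  rw [Set.ncard_singleton]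

theorem isNetwork [Finite α] (good : Good G v F ℓ) : (mkN good).IsNetwork := by
  refine ⟨Sum.inl ⟨{u : α | u ≠ v}, good.univF⟩, ?_, ?_⟩
  · intro w hw
    rcases w with A | z | a
    · exact hw.1.not_subset (good.sub A.1 A.2).1
    · exact hw
    · exact hw
  · intro w hw
    by_contra hne
    obtain ⟨u, hu⟩ := exists_in good w hne
    exact hw u hu

theorem has2lca [Finite α] (good : Good G v F ℓ) : (mkN good).Has2LCA := by
  intro x y
  by_cases hxy : x = y
  · subst hxy
    obtain ⟨h1, h2⟩ := lca_xx good x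
    exact ⟨_, h1, h2⟩
  · by_cases hxv : x = v
    · have hyv : y ≠ v := fun h => hxy (hxv.trans h.symm)
      rw [hxv, Set.pair_comm]
      obtain ⟨h1, h2⟩ := lca_xv good hyv
      exact ⟨_, h1, h2⟩
    · by_cases hyv : y = v
      · rw [hyv]
        obtain ⟨h1, h2⟩ := lca_xv good hxv
        exact ⟨_, h1, h2⟩
      · obtain ⟨A, hA, hxA, hyA, hm⟩ := good.least x y hxv hyv
        obtain ⟨h1, h2⟩ := lca_xy good hxv hyv hxy hA hxA hyA hm
        exact ⟨_, h1, h2⟩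

open Classical in
noncomputable def labT (G : SimpleGraph α) (v : α) (F : Set (Set α)) (ℓ : Set α → Bool) :
    VT α v F → Bool
  | Sum.inl A => ℓ A.1
  | Sum.inr (Sum.inl x) => if G.Adj v x.1 then true else false
  | Sum.inr (Sum.inr _) => false

theorem explains [Finite α] (good : Good G v F ℓ) :
    (mkN good).Explains (labT G v F ℓ) G := by
  classical
  refine ⟨has2lca good, ?_⟩
  intro x y hxy
  by_cases hxv : x = v
  · have hyv : y ≠ v := fun h => hxy (hxv.trans h.symm)
    rw [hxv, Set.pair_comm]
    obtain ⟨h1, h2⟩ := lca_xv good hyv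
    constructor
    · intro hadj
      refine ⟨_, h1, ?_⟩
      show (if G.Adj v y then true else false) = true
      rw [if_pos hadj]
    · rintro ⟨u, hu, ht⟩
      rw [h2 u hu] at ht
      by_cases h : G.Adj v y
      · exact h
      · exfalso
        have hcon : (if G.Adj v y then true else false) = true := ht
        rw [if_neg h] at hcon
        exact Bool.false_ne_true hcon
  · by_cases hyv : y = v
    · rw [hyv]
      have hxv' : x ≠ v := hxv
      obtain ⟨h1, h2⟩ := lca_xv good hxv'
      constructor
      · intro hadj
        refine ⟨_, h1, ?_⟩
        show (if G.Adj v x then true else false) = true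
        rw [if_pos hadj.symm]
      · rintro ⟨u, hu, ht⟩
        rw [h2 u hu] at ht
        by_cases h : G.Adj v x
        · exact h.symm
        · exfalso
          have hcon : (if G.Adj v x then true else false) = true := ht
          rw [if_neg h] at hcon
          exact Bool.false_ne_true hcon
    · obtain ⟨A, hA, hxA, hyA, hm⟩ := good.least x y hxv hyv
      obtain ⟨h1, h2⟩ := lca_xy good hxv hyv hxy hA hxA hyA hm
      constructor
      · intro hadj
        exact ⟨_, h1, (good.lab x y hxv hyv hxy A hA hxA hyA hm).mp hadj⟩
      · rintro ⟨u, hu, ht⟩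
        rw [h2 u hu] at ht
        exact (good.lab x y hxv hyv hxy A hA hxA hyA hm).mpr ht



theorem degenerate {α : Type} [Finite α] (G : SimpleGraph α) (h1 : Nat.card α = 1) :
    Level1Explainable G := by
  obtain ⟨hss, hne⟩ := Nat.card_eq_one_iff_unique.mp h1
  obtain ⟨a0⟩ := hne
  refine ⟨α, inferInstance,
    { E := fun _ _ => False,
      acyclic := fun u h => by
        cases h with
        | single e => exact e
        | tail _ e => exact e,
      leaf := id,
      leaf_inj := fun a b h => h,
      isLeaf_iff := fun u => ⟨fun _ => ⟨u, rfl⟩, fun _ w hw => hw⟩ },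
    fun _ => false, ⟨a0, fun w hw => hw, fun y _ => Subsingleton.elim y a0⟩, ?_, ?_, ?_⟩
  · intro B _
    refine le_trans (Set.ncard_le_ncard (t := {a0}) (fun w _ => ?_) (Set.toFinite _)) ?_
    · exact (Subsingleton.elim w a0 : w ∈ ({a0} : Set α))
    · rw [Set.ncard_singleton]
  · intro x y
    refine ⟨x, ⟨fun z hz => ?_, fun u _ _ => Subsingleton.elim u x⟩,
      fun u _ => Subsingleton.elim u x⟩
    have hzx : z = x := Subsingleton.elim z x
    rw [hzx]
    exact Relation.ReflTransGen.refl
  · intro x y hxy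
    exact absurd (Subsingleton.elim x y) hxy

theorem noP4_of_cograph {α : Type} (G : SimpleGraph α) (v : α)
    (h : IsCograph (G.induce {u : α | u ≠ v})) : NoP4 G.Adj {u : α | u ≠ v} := by
  intro a b c d ha hb hc hd hab hac had hbc hbd hcd e1 e2 e3 n1 n2 n3
  exact h ⟨a, ha⟩ ⟨b, hb⟩ ⟨c, hc⟩ ⟨d, hd⟩
    ⟨fun hh => hab (congrArg Subtype.val hh),
     fun hh => hac (congrArg Subtype.val hh),
     fun hh => had (congrArg Subtype.val hh),
     fun hh => hbc (congrArg Subtype.val hh),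
     fun hh => hbd (congrArg Subtype.val hh),
     fun hh => hcd (congrArg Subtype.val hh),
     e1, e2, e3, n1, n2, n3⟩

end NCAux

theorem stmt13 {α : Type} [Finite α] (G : SimpleGraph α)
    (h : IsNearCograph G) : Level1Explainable G := by
  rcases h with h1 | ⟨v, hv⟩
  · exact NCAux.degenerate G h1
  · by_cases hne : ({u : α | u ≠ v}).Nonempty
    · have hP4 := NCAux.noP4_of_cograph G v hv
      obtain ⟨F, ℓ, h1, h2, h3, h4, h5, h6⟩ :=
        NCAux.family_exists G (Set.ncard {u : α | u ≠ v}) _ le_rfl hne hP4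
      have good : NCAux.Good G v F ℓ :=
        ⟨h1, h2, fun x hx => h3 x hx, h4, fun x y hx hy => h5 x hx y hy,
         fun x y hx hy => h6 x hx y hy⟩
      exact ⟨NCAux.VT α v F, inferInstance, NCAux.mkN good, NCAux.labT G v F ℓ,
        NCAux.isNetwork good, NCAux.level_one good, NCAux.explains good⟩
    · have hcard : Nat.card α = 1 := by
        rw [Nat.card_eq_one_iff_unique]
        refine ⟨⟨fun a b => ?_⟩, ⟨v⟩⟩
        have ha : a = v := by by_contra hc; exact hne ⟨a, hc⟩
        have hb : b = v := by by_contra hc; exact hne ⟨b, hc⟩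
        rw [ha, hb]
      exact NCAux.degenerate G hcard
end

section
/- Level-1 explainable graphs contain no hole and no anti-hole; that is, if G has an induced cycle on n ≥ 5 vertices, or its complement has one, then G is not level-1 explainable. -/
set_option linter.unusedSectionVars false



/-! ### Basic order lemmas -/

namespace DAGOn

open Relation List

variable {α V : Type} {N : DAGOn α V}

@[refl] lemma below_refl (v : V) : N.below v v := ReflTransGen.refl

lemma below_trans {a b c : V} (h1 : N.below a b) (h2 : N.below b c) : N.below a c :=
  ReflTransGen.trans h1 h2

lemma below_antisymm {a b : V} (h1 : N.below a b) (h2 : N.below b a) : a = b := by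
  rcases (Relation.reflTransGen_iff_eq_or_transGen.1 h1) with h | h
  · exact h.symm
  · rcases (Relation.reflTransGen_iff_eq_or_transGen.1 h2) with h' | h'
    · exact h'
    · exact absurd (h.trans h') (N.acyclic a)

lemma ne_of_E {a b : V} (h : N.E a b) : a ≠ b := by
  rintro rfl; exact N.acyclic a (TransGen.single h)

lemma below_of_E {a b : V} (h : N.E a b) : N.below a b := ReflTransGen.single h

lemma transGen_of_below_ne {a b : V} (h : N.below a b) (hne : a ≠ b) :
    Relation.TransGen N.E a b := by
  rcases Relation.reflTransGen_iff_eq_or_transGen.1 h with h' | h'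
  · exact absurd h'.symm hne
  · exact h'

lemma not_below_of_transGen_rev {a b : V} (h : Relation.TransGen N.E a b) :
    ¬ N.below b a := fun hb => by
  rcases Relation.reflTransGen_iff_eq_or_transGen.1 hb with rfl | h'
  · exact N.acyclic a h
  · exact N.acyclic a (h.trans h')

variable [Finite V]

/-- minimal element of a nonempty set w.r.t. strict descent: nothing of S strictly below it,
  in the form used by `IsLCA`. -/
lemma exists_minimal {S : Set V} (hS : S.Nonempty) :
    ∃ m ∈ S, ∀ z ∈ S, N.below m z → z = m := by
  have hwf : WellFounded (fun a b : V => Relation.TransGen N.E b a) := by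
    have : IsTrans V (fun a b : V => Relation.TransGen N.E b a) :=
      ⟨fun a b c h1 h2 => h2.trans h1⟩
    have : IsIrrefl V (fun a b : V => Relation.TransGen N.E b a) :=
      ⟨fun a h => N.acyclic a h⟩
    exact Finite.wellFounded_of_trans_of_irrefl _
  obtain ⟨m, hm, hmin⟩ := hwf.has_min S hS
  refine ⟨m, hm, fun z hz hbz => ?_⟩
  by_contra hne
  exact hmin z hz (transGen_of_below_ne hbz (Ne.symm hne))

lemma exists_maximal {S : Set V} (hS : S.Nonempty) :
    ∃ m ∈ S, ∀ z ∈ S, N.below z m → z = m := by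
  have hwf : WellFounded (fun a b : V => Relation.TransGen N.E a b) := by
    have : IsTrans V (fun a b : V => Relation.TransGen N.E a b) :=
      ⟨fun a b c h1 h2 => h1.trans h2⟩
    have : IsIrrefl V (fun a b : V => Relation.TransGen N.E a b) :=
      ⟨fun a h => N.acyclic a h⟩
    exact Finite.wellFounded_of_trans_of_irrefl _
  obtain ⟨m, hm, hmin⟩ := hwf.has_min S hS
  refine ⟨m, hm, fun z hz hbz => ?_⟩
  by_contra hne
  exact hmin z hz (transGen_of_below_ne hbz hne)

/-- the root is above everything -/
lemma root_above (hnet : N.IsNetwork) : ∃ r : V, (∀ w, ¬ N.E w r) ∧ ∀ v, N.below r v := by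
  obtain ⟨r, hr, hruniq⟩ := hnet
  refine ⟨r, hr, ?_⟩
  intro v
  -- induct upwards using well-foundedness of parents
  have hwf : WellFounded (fun a b : V => N.E a b) := by
    have h2 : IsTrans V (fun a b : V => Relation.TransGen N.E a b) :=
      ⟨fun a b c h1 h2 => h1.trans h2⟩
    have h3 : IsIrrefl V (fun a b : V => Relation.TransGen N.E a b) :=
      ⟨fun a h => N.acyclic a h⟩
    exact Subrelation.wf (fun h => TransGen.single h)
      (Finite.wellFounded_of_trans_of_irrefl _)
  induction v using hwf.induction with
  | _ v ih =>
    by_cases hpar : ∃ p, N.E p v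
    · obtain ⟨p, hp⟩ := hpar
      exact (ih p hp).trans (below_of_E hp)
    · push_neg at hpar
      have : v = r := hruniq v hpar
      subst this; rfl

end DAGOn

/-! ### Leaves and LCAs -/

namespace DAGOn

open Relation List

variable {α V : Type} {N : DAGOn α V}

lemma leaf_no_out {x : α} {u : V} : ¬ N.E (N.leaf x) u :=
  ((N.isLeaf_iff (N.leaf x)).2 ⟨x, rfl⟩) u

lemma below_leaf_eq {x : α} {u : V} (h : N.below (N.leaf x) u) : u = N.leaf x := by
  rcases h.cases_head with rfl | ⟨c, hc, -⟩
  · rfl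
  · exact absurd hc leaf_no_out

variable [Finite V]

lemma isLCA_below_of_commonAnc {A : Set α} {u : V} (hu : N.IsCommonAnc u A)
    (huniq : ∃! v : V, N.IsLCA v A) : N.below u huniq.exists.choose := by
  classical
  obtain ⟨m, hm, hmin⟩ := exists_minimal (N := N)
    (S := {z | N.below u z ∧ N.IsCommonAnc z A}) ⟨u, ReflTransGen.refl, hu⟩
  have hlca : N.IsLCA m A := by
    refine ⟨hm.2, fun z hz hbz => ?_⟩
    exact hmin z ⟨hm.1.trans hbz, hz⟩ hbz
  have : m = huniq.exists.choose := huniq.unique hlca huniq.exists.choose_spec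
  exact this ▸ hm.1

/-! ### Paths as lists -/

/-- `IsPath a b l` : `l` is a directed path from `a` to `b`. -/
def IsPath (N : DAGOn α V) (a b : V) (l : List V) : Prop :=
  l ≠ [] ∧ l.head? = some a ∧ l.getLast? = some b ∧ l.Chain' N.E

lemma IsPath.mem_head {a b : V} {l : List V} (h : N.IsPath a b l) : a ∈ l := by
  obtain ⟨hne, hh, -, -⟩ := h
  exact List.mem_of_mem_head? hh

lemma IsPath.mem_last {a b : V} {l : List V} (h : N.IsPath a b l) : b ∈ l := by
  obtain ⟨hne, -, hl, -⟩ := h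
  exact List.mem_of_mem_getLast? hl

lemma IsPath.pairwise {a b : V} {l : List V} (h : N.IsPath a b l) :
    l.Pairwise (Relation.TransGen N.E) := by
  have : l.Chain' (Relation.TransGen N.E) :=
    List.IsChain.imp (fun a b hab => TransGen.single hab) h.2.2.2
  exact List.isChain_iff_pairwise.mp this

lemma IsPath.nodup {a b : V} {l : List V} (h : N.IsPath a b l) : l.Nodup :=
  h.pairwise.imp (fun h => by
    intro rfl'
    exact N.acyclic _ (rfl' ▸ h))

lemma IsPath.singleton (a : V) : N.IsPath a a [a] := by
  refine ⟨by simp, by simp, by simp, List.IsChain.singleton a⟩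

/-- build a path from reachability -/
lemma IsPath.of_below {a b : V} (h : N.below a b) : ∃ l, N.IsPath a b l := by
  induction h using Relation.ReflTransGen.head_induction_on with
  | refl => exact ⟨[b], IsPath.singleton b⟩
  | head hab _ ih =>
    obtain ⟨l, hl⟩ := ih
    rename_i a' c' _
    refine ⟨a' :: l, ?_, by simp, ?_, ?_⟩
    · simp
    · rcases l with _ | ⟨x, l'⟩
      · exact absurd rfl hl.1
      · rw [List.getLast?_cons_cons]
        exact hl.2.2.1
    · rcases l with _ | ⟨x, l'⟩
      · exact absurd rfl hl.1
      · have hx : x = c' := by simpa using hl.2.1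
        exact List.IsChain.cons_cons (hx ▸ hab) hl.2.2.2

lemma IsPath.below_of_mem {a b : V} {l : List V} (h : N.IsPath a b l) {z : V} (hz : z ∈ l) :
    N.below a z ∧ N.below z b := by
  obtain ⟨s, t, rfl⟩ := List.append_of_mem hz
  constructor
  · rcases s with _ | ⟨x, s'⟩
    · have : z = a := by simpa using h.2.1
      exact this ▸ ReflTransGen.refl
    · have hxa : x = a := by simpa using h.2.1
      have hp := h.pairwise
      rw [List.pairwise_append] at hp
      have := hp.2.2 x (by simp) z (by simp)
      exact (hxa ▸ this).to_reflTransGen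
  · rcases t.eq_nil_or_concat with rfl | ⟨t', y, rfl⟩
    · have : z = b := by
        have := h.2.2.1
        rw [List.getLast?_append_cons] at this
        simpa using this
      exact this ▸ ReflTransGen.refl
    · have hyb : y = b := by
        have := h.2.2.1
        rw [List.concat_eq_append,
          show s ++ z :: (t' ++ [y]) = (s ++ z :: t') ++ [y] by simp,
          List.getLast?_concat] at this
        simpa using this
      have hp := h.pairwise
      rw [List.pairwise_append] at hp
      have h2 := hp.2.1
      rw [List.pairwise_cons] at h2
      have := h2.1 y (by simp [List.concat_eq_append])
      exact hyb ▸ this.to_reflTransGen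

/-! ### Path splitting and concatenation -/

lemma IsPath.cons {a b c : V} {l : List V} (hab : N.E a b) (h : N.IsPath b c l) :
    N.IsPath a c (a :: l) := by
  rcases l with _ | ⟨x, l'⟩
  · exact absurd rfl h.1
  · have hx : x = b := by simpa using h.2.1
    refine ⟨by simp, by simp, ?_, ?_⟩
    · rw [List.getLast?_cons_cons]; exact h.2.2.1
    · exact List.IsChain.cons_cons (hx ▸ hab) h.2.2.2

lemma IsPath.concat {a b c : V} {l m : List V} (h1 : N.IsPath a b l) (h2 : N.IsPath b c m) :
    N.IsPath a c (l ++ m.tail) := by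
  obtain ⟨m', rfl⟩ : ∃ m', m = b :: m' := by
    rcases m with _ | ⟨x, m'⟩
    · exact absurd rfl h2.1
    · exact ⟨m', by rw [show x = b by simpa using h2.2.1]⟩
  · rcases m' with _ | ⟨y, m''⟩
    · have hbc : b = c := by simpa using h2.2.2.1
      simpa using (hbc ▸ h1)
    · simp only [List.tail_cons]
      refine ⟨by simp [h1.1], ?_, ?_, ?_⟩
      · rw [List.head?_append_of_ne_nil _ h1.1]; exact h1.2.1
      · rw [List.getLast?_append_of_ne_nil _ (by simp)]
        have := h2.2.2.1
        rwa [List.getLast?_cons_cons] at this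
      · refine List.isChain_append.2 ?_
        refine ⟨h1.2.2.2, (h2.2.2.2).tail, ?_⟩
        intro p hp q hq
        have hpb : p = b := by
          rw [h1.2.2.1] at hp
          have : b = p := by simpa using hp
          exact this.symm
        have hqy : q = y := by
          have : y = q := by simpa using hq
          exact this.symm
        subst hpb; subst hqy
        exact (List.isChain_cons_cons.1 h2.2.2.2).1

lemma IsPath.split3 {a b s t : V} {l : List V} (h : N.IsPath a b l)
    (hs : s ∈ l) (ht : t ∈ l) (hst : Relation.TransGen N.E s t) :
    ∃ A M D, l = A ++ s :: M ++ t :: D := by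
  obtain ⟨A, rest, rfl⟩ := List.append_of_mem hs
  have hp := h.pairwise
  rw [List.pairwise_append] at hp
  have htrest : t ∈ rest := by
    rcases List.mem_append.1 ht with h' | h'
    · exact absurd ((hp.2.2 t h' s (by simp)).trans hst) (N.acyclic t)
    · rcases List.mem_cons.1 h' with rfl | h''
      · exact absurd hst (N.acyclic t)
      · exact h''
  obtain ⟨M, D, rfl⟩ := List.append_of_mem htrest
  exact ⟨A, M, D, by simp⟩

lemma IsPath.mem_comparable {a b z1 z2 : V} {l : List V} (h : N.IsPath a b l)
    (h1 : z1 ∈ l) (h2 : z2 ∈ l) :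
    z1 = z2 ∨ Relation.TransGen N.E z1 z2 ∨ Relation.TransGen N.E z2 z1 := by
  by_cases he : z1 = z2
  · exact Or.inl he
  · have hp : l.Pairwise (fun u v =>
        Relation.TransGen N.E u v ∨ Relation.TransGen N.E v u) :=
      h.pairwise.imp (fun h => Or.inl h)
    haveI : Std.Symm (fun u v : V => Relation.TransGen N.E u v ∨ Relation.TransGen N.E v u) :=
      ⟨fun u v h => h.symm⟩
    exact Or.inr (hp.forall h1 h2 he)

/-! ### Connectivity helpers -/

/-- the step relation of `ConnOn` -/
def stepRel (N : DAGOn α V) (S : Set V) (a b : V) : Prop :=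
  a ∈ S ∧ b ∈ S ∧ (N.E a b ∨ N.E b a)

lemma stepRel_symm {S : Set V} : Symmetric (N.stepRel S) := by
  rintro a b ⟨ha, hb, h⟩; exact ⟨hb, ha, h.symm⟩

lemma conn_symm {S : Set V} {u v : V} (h : Relation.ReflTransGen (N.stepRel S) u v) :
    Relation.ReflTransGen (N.stepRel S) v u :=
  by haveI : Std.Symm (N.stepRel S) := ⟨fun a b h => stepRel_symm h⟩; exact Std.Symm.symm _ _ h

lemma conn_mono {S T : Set V} (hST : S ⊆ T) {u v : V}
    (h : Relation.ReflTransGen (N.stepRel S) u v) :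
    Relation.ReflTransGen (N.stepRel T) u v := by
  refine Relation.ReflTransGen.mono ?_ _ _ h
  rintro a b ⟨ha, hb, he⟩
  exact ⟨hST ha, hST hb, he⟩

lemma chain_conn_head {S : Set V} : ∀ (l : List V) (a : V),
    List.Chain' (fun x y => N.E x y ∨ N.E y x) (a :: l) →
    (∀ z ∈ a :: l, z ∈ S) →
    ∀ z ∈ a :: l, Relation.ReflTransGen (N.stepRel S) a z := by
  intro l
  induction l with
  | nil =>
    intro a _ _ z hz
    rcases List.mem_singleton.1 hz with rfl
    exact ReflTransGen.refl
  | cons b l' ih =>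
    intro a hc hm z hz
    rcases List.mem_cons.1 hz with rfl | hz'
    · exact ReflTransGen.refl
    · have hab : N.stepRel S a b :=
        ⟨hm a (by simp), hm b (by simp), (List.isChain_cons_cons.1 hc).1⟩
      have := ih b (List.isChain_cons_cons.1 hc).2 (fun z hz => hm z (List.mem_cons_of_mem _ hz)) z hz'
      exact ReflTransGen.head hab this

lemma chain_conn {S : Set V} {l : List V}
    (hc : List.Chain' (fun x y => N.E x y ∨ N.E y x) l)
    (hm : ∀ z ∈ l, z ∈ S) {u z : V} (hu : u ∈ l) (hz : z ∈ l) :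
    Relation.ReflTransGen (N.stepRel S) u z := by
  rcases l with _ | ⟨a, l'⟩
  · simp at hu
  · exact (conn_symm (chain_conn_head _ _ hc hm u hu)).trans
      (chain_conn_head _ _ hc hm z hz)

lemma chain_undir {l : List V} (h : List.Chain' N.E l) :
    List.Chain' (fun x y => N.E x y ∨ N.E y x) l :=
  List.IsChain.imp (fun a b hab => Or.inl hab) h

/-! ### Biconnectivity of a cycle made of two internally disjoint chains -/

def cycSet (s t : V) (M M2 : List V) : Set V := {z | z = s ∨ z = t ∨ z ∈ M ∨ z ∈ M2}

lemma cycSet_comm (s t : V) (M M2 : List V) : cycSet s t M M2 = cycSet s t M2 M := by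
  ext z; simp only [cycSet, Set.mem_setOf_eq]; tauto

lemma connOn_cyc_remove_mid {s t v : V} {M M2 : List V}
    (h1 : List.Chain' N.E (s :: M ++ [t])) (h2 : List.Chain' N.E (s :: M2 ++ [t]))
    (hdisj : ∀ z ∈ M, z ∉ M2) (hsM : s ∉ M) (hsM2 : s ∉ M2)
    (htM : t ∉ M) (htM2 : t ∉ M2) (hst : s ≠ t) (hvM : v ∈ M) :
    N.ConnOn (cycSet s t M M2 \ {v}) := by
  set S : Set V := cycSet s t M M2 with hSdef
  set S' : Set V := S \ {v} with hS'
  have hmem2 : ∀ z ∈ s :: M2 ++ [t], z ∈ S := by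
    intro z hz
    rcases List.mem_cons.1 hz with rfl | hz'
    · exact Or.inl rfl
    · rcases List.mem_append.1 hz' with h' | h'
      · exact Or.inr (Or.inr (Or.inr h'))
      · exact Or.inr (Or.inl (List.mem_singleton.1 h'))
  obtain ⟨Ma, Mb, rfl⟩ := List.append_of_mem hvM
  have hvs : v ≠ s := by rintro rfl; exact hsM hvM
  have hvt : v ≠ t := by rintro rfl; exact htM hvM
  have hvM2 : v ∉ M2 := hdisj v hvM
  have hnd : (s :: (Ma ++ v :: Mb) ++ [t]).Nodup := by
    refine IsPath.nodup (N := N) (a := s) (b := t) ?_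
    exact ⟨by simp, by simp, by rw [show s :: (Ma ++ v :: Mb) ++ [t]
      = (s :: (Ma ++ v :: Mb)) ++ [t] by simp, List.getLast?_concat], h1⟩
  have hndX : (Ma ++ v :: Mb).Nodup := by
    have h0 : ([s] ++ (Ma ++ v :: Mb) ++ [t]).Nodup := by simpa using hnd
    exact (h0.of_append_left).of_append_right
  have hpwX : (Ma ++ v :: Mb).Pairwise (· ≠ ·) := hndX
  rw [List.pairwise_append] at hpwX
  have hvMa : v ∉ Ma := fun h => hpwX.2.2 v h v (by simp) rfl
  have hvMb : v ∉ Mb := by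
    have := hpwX.2.1
    rw [List.pairwise_cons] at this
    intro h
    exact this.1 v h rfl
  have hsplit : s :: (Ma ++ v :: Mb) ++ [t] = (s :: Ma) ++ (v :: (Mb ++ [t])) := by simp
  have hcP : List.Chain' N.E (s :: Ma) := (List.isChain_append.1 (hsplit ▸ h1)).1
  have hcQ : List.Chain' N.E (Mb ++ [t]) := by
    have h' : List.Chain' N.E (v :: (Mb ++ [t])) := (List.isChain_append.1 (hsplit ▸ h1)).2.1
    exact h'.tail
  have hmP : ∀ w ∈ s :: Ma, w ∈ S' := by
    intro w hw
    rcases List.mem_cons.1 hw with rfl | h'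
    · exact ⟨Or.inl rfl, by simp [hvs.symm]⟩
    · exact ⟨Or.inr (Or.inr (Or.inl (by simp [h']))),
        by simp; rintro rfl; exact hvMa h'⟩
  have hmQ : ∀ w ∈ Mb ++ [t], w ∈ S' := by
    intro w hw
    rcases List.mem_append.1 hw with h' | h'
    · exact ⟨Or.inr (Or.inr (Or.inl (by simp [h']))),
        by simp; rintro rfl; exact hvMb h'⟩
    · rcases List.mem_singleton.1 h' with rfl
      exact ⟨Or.inr (Or.inl rfl), by simp [hvt.symm]⟩
  have hm2 : ∀ w ∈ s :: M2 ++ [t], w ∈ S' := by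
    intro w hw
    refine ⟨hmem2 w hw, ?_⟩
    simp only [Set.mem_singleton_iff]
    rintro rfl
    rcases List.mem_cons.1 hw with h' | h'
    · exact hvs h'
    · rcases List.mem_append.1 h' with h'' | h''
      · exact hvM2 h''
      · exact hvt (List.mem_singleton.1 h'')
  have hst' : Relation.ReflTransGen (N.stepRel S') s t :=
    chain_conn (chain_undir (N := N) h2) hm2 (by simp) (by simp)
  have key : ∀ w ∈ S', Relation.ReflTransGen (N.stepRel S') w s := by
    intro w hw
    have hwv : w ≠ v := by
      intro h; exact hw.2 (by simp [h])
    rcases hw.1 with rfl | rfl | h' | h'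
    · exact ReflTransGen.refl
    · exact conn_symm hst'
    · rcases List.mem_append.1 h' with h'' | h''
      · exact chain_conn (chain_undir (N := N) hcP) hmP (by simp [h'']) (by simp)
      · rcases List.mem_cons.1 h'' with h3 | h3
        · exact absurd h3 hwv
        · exact (chain_conn (chain_undir (N := N) hcQ) hmQ (by simp [h3]) (by simp)).trans
            (conn_symm hst')
    · exact (chain_conn (chain_undir (N := N) h2) hm2 (by simp [h']) (by simp)).trans
        (conn_symm hst')
  intro u hu z hz
  exact (key u hu).trans (conn_symm (key z hz))

lemma biconn_two_chains {s t : V} {M M2 : List V}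
    (h1 : List.Chain' N.E (s :: M ++ [t])) (h2 : List.Chain' N.E (s :: M2 ++ [t]))
    (hdisj : ∀ z ∈ M, z ∉ M2) (hsM : s ∉ M) (hsM2 : s ∉ M2)
    (htM : t ∉ M) (htM2 : t ∉ M2) (hst : s ≠ t) :
    N.BiconnOn (cycSet s t M M2) := by
  set S : Set V := cycSet s t M M2 with hSdef
  have hmem1 : ∀ z ∈ s :: M ++ [t], z ∈ S := by
    intro z hz
    rcases List.mem_cons.1 hz with rfl | hz'
    · exact Or.inl rfl
    · rcases List.mem_append.1 hz' with h' | h'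
      · exact Or.inr (Or.inr (Or.inl h'))
      · exact Or.inr (Or.inl (List.mem_singleton.1 h'))
  have hmem2 : ∀ z ∈ s :: M2 ++ [t], z ∈ S := by
    intro z hz
    rcases List.mem_cons.1 hz with rfl | hz'
    · exact Or.inl rfl
    · rcases List.mem_append.1 hz' with h' | h'
      · exact Or.inr (Or.inr (Or.inr h'))
      · exact Or.inr (Or.inl (List.mem_singleton.1 h'))
  constructor
  · intro u hu v hv
    have key : ∀ w ∈ S, Relation.ReflTransGen (N.stepRel S) w s := by
      intro w hw
      rcases hw with rfl | rfl | h' | h'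
      · exact ReflTransGen.refl
      · exact conn_symm (chain_conn (chain_undir (N := N) h1) hmem1 (by simp) (by simp))
      · exact chain_conn (chain_undir (N := N) h1) hmem1 (by simp [h']) (by simp)
      · exact chain_conn (chain_undir (N := N) h2) hmem2 (by simp [h']) (by simp)
    exact (key u hu).trans (conn_symm (key v hv))
  · intro v hv
    rcases hv with rfl | rfl | hvM | hvM2
    · -- v = s
      intro u hu z hz
      set S' : Set V := S \ {v} with hS'
      have hc1 : List.Chain' N.E (M ++ [t]) := h1.tail
      have hc2 : List.Chain' N.E (M2 ++ [t]) := h2.tail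
      have hm1 : ∀ z ∈ M ++ [t], z ∈ S' := by
        intro z hz
        rcases List.mem_append.1 hz with h' | h'
        · exact ⟨Or.inr (Or.inr (Or.inl h')), by simp; rintro rfl; exact hsM h'⟩
        · rcases List.mem_singleton.1 h' with rfl
          exact ⟨Or.inr (Or.inl rfl), by simp [hst.symm]⟩
      have hm2 : ∀ z ∈ M2 ++ [t], z ∈ S' := by
        intro z hz
        rcases List.mem_append.1 hz with h' | h'
        · exact ⟨Or.inr (Or.inr (Or.inr h')), by simp; rintro rfl; exact hsM2 h'⟩
        · rcases List.mem_singleton.1 h' with rfl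
          exact ⟨Or.inr (Or.inl rfl), by simp [hst.symm]⟩
      have key : ∀ w ∈ S', Relation.ReflTransGen (N.stepRel S') w t := by
        intro w hw
        have hws : w ≠ v := by
          intro h; exact hw.2 (by simp [h])
        rcases hw.1 with rfl | rfl | h' | h'
        · exact absurd rfl hws
        · exact ReflTransGen.refl
        · exact chain_conn (chain_undir (N := N) hc1) hm1 (by simp [h']) (by simp)
        · exact chain_conn (chain_undir (N := N) hc2) hm2 (by simp [h']) (by simp)
      exact (key u hu).trans (conn_symm (key z hz))
    · -- v = t
      intro u hu z hz
      set S' : Set V := S \ {v} with hS'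
      have hc1 : List.Chain' N.E (s :: M) := by
        have h' : List.Chain' N.E ((s :: M) ++ [v]) := by simpa using h1
        exact (List.isChain_append.1 h').1
      have hc2 : List.Chain' N.E (s :: M2) := by
        have h' : List.Chain' N.E ((s :: M2) ++ [v]) := by simpa using h2
        exact (List.isChain_append.1 h').1
      have hm1 : ∀ z ∈ s :: M, z ∈ S' := by
        intro z hz
        rcases List.mem_cons.1 hz with rfl | h'
        · exact ⟨Or.inl rfl, by simp [hst]⟩
        · exact ⟨Or.inr (Or.inr (Or.inl h')), by simp; rintro rfl; exact htM h'⟩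
      have hm2 : ∀ z ∈ s :: M2, z ∈ S' := by
        intro z hz
        rcases List.mem_cons.1 hz with rfl | h'
        · exact ⟨Or.inl rfl, by simp [hst]⟩
        · exact ⟨Or.inr (Or.inr (Or.inr h')), by simp; rintro rfl; exact htM2 h'⟩
      have key : ∀ w ∈ S', Relation.ReflTransGen (N.stepRel S') w s := by
        intro w hw
        have hwt : w ≠ v := by
          intro h; exact hw.2 (by simp [h])
        rcases hw.1 with rfl | rfl | h' | h'
        · exact ReflTransGen.refl
        · exact absurd rfl hwt
        · exact chain_conn (chain_undir (N := N) hc1) hm1 (by simp [h']) (by simp)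
        · exact chain_conn (chain_undir (N := N) hc2) hm2 (by simp [h']) (by simp)
      exact (key u hu).trans (conn_symm (key z hz))
    · exact connOn_cyc_remove_mid h1 h2 hdisj hsM hsM2 htM htM2 hst hvM
    · have := connOn_cyc_remove_mid h2 h1 (fun z hz hz' => hdisj z hz' hz)
        hsM2 hsM htM2 htM hst hvM2
      rwa [cycSet_comm] at this

/-! ### Blocks -/

lemma exists_block_of_biconn {S : Set V} (hS : N.BiconnOn S) :
    ∃ B : Set V, N.IsBlock B ∧ S ⊆ B := by
  classical
  have hfam : {B : Set V | N.BiconnOn B ∧ S ⊆ B}.Finite := Set.toFinite _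
  have hne : {B : Set V | N.BiconnOn B ∧ S ⊆ B}.Nonempty := ⟨S, hS, subset_rfl⟩
  obtain ⟨B, hB, hmax⟩ := Set.Finite.exists_maximalFor Set.ncard _ hfam hne
  refine ⟨B, ⟨hB.1, ?_⟩, hB.2⟩
  intro B' hB' hsub
  have hB'mem : B' ∈ {B : Set V | N.BiconnOn B ∧ S ⊆ B} := ⟨hB', hB.2.trans hsub⟩
  have hcard : B.ncard ≤ B'.ncard := Set.ncard_le_ncard hsub (Set.toFinite _)
  have := hmax hB'mem hcard
  exact (Set.eq_of_subset_of_ncard_le hsub this (Set.toFinite _)).symm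

lemma biconn_union {S T : Set V} (hS : N.BiconnOn S) (hT : N.BiconnOn T)
    {a b : V} (hab : a ≠ b) (haS : a ∈ S) (haT : a ∈ T) (hbS : b ∈ S) (hbT : b ∈ T) :
    N.BiconnOn (S ∪ T) := by
  have hconn : ∀ p ∈ S ∩ T, ∀ u ∈ S ∪ T,
      Relation.ReflTransGen (N.stepRel (S ∪ T)) u p := by
    rintro p ⟨hpS, hpT⟩ u hu
    rcases hu with hu | hu
    · exact conn_mono Set.subset_union_left (hS.1 u hu p hpS)
    · exact conn_mono Set.subset_union_right (hT.1 u hu p hpT)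
  constructor
  · intro u hu z hz
    exact (hconn a ⟨haS, haT⟩ u hu).trans (conn_symm (hconn a ⟨haS, haT⟩ z hz))
  · intro v hv
    obtain ⟨p, hpS, hpT, hpv⟩ : ∃ p, p ∈ S ∧ p ∈ T ∧ p ≠ v := by
      by_cases hva : v = a
      · exact ⟨b, hbS, hbT, by rw [hva]; exact fun h => hab h.symm⟩
      · exact ⟨a, haS, haT, fun h => hva h.symm⟩
    have hSsub : S \ {v} ⊆ (S ∪ T) \ {v} := by
      intro z hz; exact ⟨Or.inl hz.1, hz.2⟩
    have hTsub : T \ {v} ⊆ (S ∪ T) \ {v} := by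
      intro z hz; exact ⟨Or.inr hz.1, hz.2⟩
    have hconn' : ∀ u ∈ (S ∪ T) \ {v},
        Relation.ReflTransGen (N.stepRel ((S ∪ T) \ {v})) u p := by
      rintro u ⟨hu, huv⟩
      rcases hu with hu | hu
      · by_cases hvS : v ∈ S
        · exact conn_mono hSsub (hS.2 v hvS u ⟨hu, huv⟩ p ⟨hpS, hpv⟩)
        · refine conn_mono hSsub (Relation.ReflTransGen.mono ?_ _ _ (hS.1 u hu p hpS))
          rintro x y ⟨hx, hy, he⟩
          exact ⟨⟨hx, fun h => hvS (h ▸ hx)⟩, ⟨hy, fun h => hvS (h ▸ hy)⟩, he⟩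
      · by_cases hvT : v ∈ T
        · exact conn_mono hTsub (hT.2 v hvT u ⟨hu, huv⟩ p ⟨hpT, hpv⟩)
        · refine conn_mono hTsub (Relation.ReflTransGen.mono ?_ _ _ (hT.1 u hu p hpT))
          rintro x y ⟨hx, hy, he⟩
          exact ⟨⟨hx, fun h => hvT (h ▸ hx)⟩, ⟨hy, fun h => hvT (h ▸ hy)⟩, he⟩
    intro u hu z hz
    exact (hconn' u hu).trans (conn_symm (hconn' z hz))

lemma block_eq_of_two_mem {B1 B2 : Set V} (h1 : N.IsBlock B1) (h2 : N.IsBlock B2)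
    {a b : V} (hab : a ≠ b) (ha1 : a ∈ B1) (ha2 : a ∈ B2) (hb1 : b ∈ B1) (hb2 : b ∈ B2) :
    B1 = B2 := by
  have hu := biconn_union (N := N) h1.1 h2.1 hab ha1 ha2 hb1 hb2
  have e1 : B1 ∪ B2 = B1 := h1.2 _ hu Set.subset_union_left
  have e2 : B1 ∪ B2 = B2 := h2.2 _ hu Set.subset_union_right
  rw [← e1, e2]

/-- In a level-1 network, a block contains at most one non-maximal hybrid vertex. -/
lemma hybrid_unique_in_block (hlvl : N.IsLevel 1) {B : Set V} (hB : N.IsBlock B)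
    {z1 z2 : V} (h1 : z1 ∈ B ∧ N.IsHybrid z1 ∧ ¬ N.MaxIn B z1)
    (h2 : z2 ∈ B ∧ N.IsHybrid z2 ∧ ¬ N.MaxIn B z2) : z1 = z2 := by
  by_contra hne
  have hsub : ({z1, z2} : Set V) ⊆ {v | v ∈ B ∧ N.IsHybrid v ∧ ¬ N.MaxIn B v} := by
    rintro z (rfl | hz)
    · exact h1
    · rcases hz with rfl
      exact h2
  have h2le : 2 ≤ ({v | v ∈ B ∧ N.IsHybrid v ∧ ¬ N.MaxIn B v} : Set V).ncard := by
    rw [← Set.ncard_pair hne]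
    exact Set.ncard_le_ncard hsub (Set.toFinite _)
  have := hlvl B hB
  omega

/-! ### The main cycle-extraction lemma -/

lemma cycle_main (hlvl : N.IsLevel 1) {w y v : V} {l1 l2 : List V}
    (hp1 : N.IsPath w y l1) (hp2 : N.IsPath w y l2) (hv1 : v ∈ l1) (hv2 : v ∉ l2) :
    ∃ (B : Set V) (s t : V), N.IsBlock B ∧
      s ∈ l1 ∧ s ∈ l2 ∧ t ∈ l1 ∧ t ∈ l2 ∧
      N.below s v ∧ N.below v t ∧
      s ∈ B ∧ t ∈ B ∧ v ∈ B ∧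
      N.IsHybrid t ∧ ¬ N.MaxIn B t ∧
      (∀ z, z ∈ l1 → z ∈ l2 → N.below v z → N.below t z) ∧
      (∀ z, z ∈ l2 → N.below s z → N.below z t → z ∈ B) ∧
      (∀ h, h ∈ l2 → h ∉ l1 → N.IsHybrid h → N.below h v ∨ N.below v h) := by
  classical
  obtain ⟨s, hsS, hsmin⟩ := exists_minimal (N := N)
    (S := {z | z ∈ l1 ∧ z ∈ l2 ∧ N.below z v})
    ⟨w, hp1.mem_head, hp2.mem_head, (hp1.below_of_mem hv1).1⟩
  obtain ⟨t, htS, htmax⟩ := exists_maximal (N := N)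
    (S := {z | z ∈ l1 ∧ z ∈ l2 ∧ N.below v z})
    ⟨y, hp1.mem_last, hp2.mem_last, (hp1.below_of_mem hv1).2⟩
  obtain ⟨hs1, hs2, hsv⟩ := hsS
  obtain ⟨ht1, ht2, hvt⟩ := htS
  have hsvne : s ≠ v := fun h => hv2 (h ▸ hs2)
  have htvne : t ≠ v := fun h => hv2 (h ▸ ht2)
  have hsvT : Relation.TransGen N.E s v := transGen_of_below_ne hsv hsvne
  have hvtT : Relation.TransGen N.E v t := transGen_of_below_ne hvt (Ne.symm htvne)
  have hst : s ≠ t := by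
    rintro rfl
    exact hsvne (below_antisymm hsv hvt)
  have hstT : Relation.TransGen N.E s t := hsvT.trans hvtT
  have hexp13 : ∀ z, z ∈ l1 → z ∈ l2 → N.below v z → N.below t z := by
    intro z hz1 hz2 hvz
    rcases hp1.mem_comparable hz1 ht1 with rfl | h' | h'
    · exact ReflTransGen.refl
    · have := htmax z ⟨hz1, hz2, hvz⟩ h'.to_reflTransGen
      exact this ▸ ReflTransGen.refl
    · exact h'.to_reflTransGen
  -- split l1
  obtain ⟨A, M, D, hsplit1⟩ := hp1.split3 hs1 ht1 hstT
  have hpw1 := hp1.pairwise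
  rw [hsplit1] at hpw1
  have h_asm := List.pairwise_append.1 hpw1
  have h_a := List.pairwise_append.1 h_asm.1
  have h_sm := List.pairwise_cons.1 h_a.2.1
  have h_td := List.pairwise_cons.1 h_asm.2.1
  have hnd1 := hp1.nodup
  rw [hsplit1] at hnd1
  have nd_asm := List.pairwise_append.1 hnd1
  have nd_a := List.pairwise_append.1 nd_asm.1
  have nd_sm := List.pairwise_cons.1 nd_a.2.1
  have hsM : s ∉ M := fun h => nd_sm.1 s h rfl
  have htM : t ∉ M := fun h =>
    nd_asm.2.2 t (List.mem_append.2 (Or.inr (by simp [h]))) t (by simp) rfl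
  have hvM : v ∈ M := by
    have hv1' := hv1
    rw [hsplit1] at hv1'
    rcases List.mem_append.1 hv1' with h' | h'
    · rcases List.mem_append.1 h' with h'' | h''
      · exact absurd (h_a.2.2 v h'' s (by simp)) (fun hT => N.acyclic v (hT.trans hsvT))
      · rcases List.mem_cons.1 h'' with rfl | h3
        · exact absurd rfl hsvne.symm
        · exact h3
    · rcases List.mem_cons.1 h' with rfl | h3
      · exact absurd rfl htvne.symm
      · exact absurd (h_td.1 v h3) (fun hT => N.acyclic v (hvtT.trans hT))
  have hMl2 : ∀ z ∈ M, z ∉ l2 := by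
    intro z hzM hz2
    have hz1 : z ∈ l1 := by rw [hsplit1]; simp [hzM]
    rcases hp1.mem_comparable hz1 hv1 with rfl | h' | h'
    · exact hv2 hz2
    · have := hsmin z ⟨hz1, hz2, h'.to_reflTransGen⟩ (h_sm.1 z hzM).to_reflTransGen
      exact hsM (this ▸ hzM)
    · have := htmax z ⟨hz1, hz2, h'.to_reflTransGen⟩
        (h_asm.2.2 z (List.mem_append.2 (Or.inr (by simp [hzM]))) t (by simp)).to_reflTransGen
      exact htM (this ▸ hzM)
  -- split l2
  obtain ⟨A2, M2, D2, hsplit2⟩ := hp2.split3 hs2 ht2 hstT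
  have hpw2 := hp2.pairwise
  rw [hsplit2] at hpw2
  have h2_asm := List.pairwise_append.1 hpw2
  have h2_a := List.pairwise_append.1 h2_asm.1
  have h2_sm := List.pairwise_cons.1 h2_a.2.1
  have h2_td := List.pairwise_cons.1 h2_asm.2.1
  have hnd2 := hp2.nodup
  rw [hsplit2] at hnd2
  have nd2_asm := List.pairwise_append.1 hnd2
  have nd2_a := List.pairwise_append.1 nd2_asm.1
  have nd2_sm := List.pairwise_cons.1 nd2_a.2.1
  have hsM2 : s ∉ M2 := fun h => nd2_sm.1 s h rfl
  have htM2 : t ∉ M2 := fun h =>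
    nd2_asm.2.2 t (List.mem_append.2 (Or.inr (by simp [h]))) t (by simp) rfl
  have hdisj : ∀ z ∈ M, z ∉ M2 := by
    intro z hz hz2
    exact hMl2 z hz (by rw [hsplit2]; simp [hz2])
  have hchain1 : List.Chain' N.E (s :: M ++ [t]) := by
    refine List.IsChain.infix hp1.2.2.2 ⟨A, D, ?_⟩
    rw [hsplit1]; simp
  have hchain2 : List.Chain' N.E (s :: M2 ++ [t]) := by
    refine List.IsChain.infix hp2.2.2.2 ⟨A2, D2, ?_⟩
    rw [hsplit2]; simp
  have hbic := biconn_two_chains (N := N) hchain1 hchain2 hdisj hsM hsM2 htM htM2 hst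
  obtain ⟨B, hB, hSB⟩ := exists_block_of_biconn hbic
  have hsB : s ∈ B := hSB (Or.inl rfl)
  have htB : t ∈ B := hSB (Or.inr (Or.inl rfl))
  have hvB : v ∈ B := hSB (Or.inr (Or.inr (Or.inl hvM)))
  have hMB : ∀ z ∈ M, z ∈ B := fun z hz => hSB (Or.inr (Or.inr (Or.inl hz)))
  have hM2B : ∀ z ∈ M2, z ∈ B := fun z hz => hSB (Or.inr (Or.inr (Or.inr hz)))
  have hMne : M ≠ [] := List.ne_nil_of_mem hvM
  have hlast1 : N.E ((s :: M).getLast (by simp)) t := by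
    have h' : List.Chain' N.E ((s :: M) ++ [t]) := by simpa using hchain1
    have := (List.isChain_append.1 h').2.2
    exact this _ (by rw [List.getLast?_eq_getLast_of_ne_nil (by simp)]; rfl) t rfl
  have hlast2 : N.E ((s :: M2).getLast (by simp)) t := by
    have h' : List.Chain' N.E ((s :: M2) ++ [t]) := by simpa using hchain2
    have := (List.isChain_append.1 h').2.2
    exact this _ (by rw [List.getLast?_eq_getLast_of_ne_nil (by simp)]; rfl) t rfl
  have hp1M : (s :: M).getLast (by simp) ∈ M := by
    rw [List.getLast_cons hMne]
    exact List.getLast_mem hMne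
  have hp2mem : (s :: M2).getLast (by simp) ∈ s :: M2 := List.getLast_mem (by simp)
  have hpredne : (s :: M).getLast (by simp) ≠ (s :: M2).getLast (by simp) := by
    intro h
    rcases List.mem_cons.1 hp2mem with h' | h'
    · rw [h, h'] at hp1M
      exact hsM hp1M
    · rw [h] at hp1M
      exact hdisj _ hp1M h'
  have hthyb : N.IsHybrid t := ⟨_, _, hpredne, hlast1, hlast2⟩
  have htnm : ¬ N.MaxIn B t := by
    rintro ⟨-, hmax⟩
    have := hmax _ (hMB _ hp1M) (below_of_E hlast1)
    exact htM (this ▸ hp1M)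
  refine ⟨B, s, t, hB, hs1, hs2, ht1, ht2, hsv, hvt, hsB, htB, hvB, hthyb, htnm,
    hexp13, ?_, ?_⟩
  · -- export (14)
    intro z hz2 hsz hzt
    rw [hsplit2] at hz2
    rcases List.mem_append.1 hz2 with h' | h'
    · rcases List.mem_append.1 h' with h'' | h''
      · have hT := h2_a.2.2 z h'' s (by simp)
        have hzs : z = s := below_antisymm hT.to_reflTransGen hsz
        exact hzs ▸ hsB
      · rcases List.mem_cons.1 h'' with rfl | h3
        · exact hsB
        · exact hM2B z h3
    · rcases List.mem_cons.1 h' with rfl | h3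
      · exact htB
      · have hT := h2_td.1 z h3
        have : z = t := below_antisymm hzt hT.to_reflTransGen
        exact this ▸ htB
  · -- export (15)
    intro h hh2 hh1 hhyb
    have hhs : h ≠ s := fun e => hh1 (e ▸ hs1)
    have hht : h ≠ t := fun e => hh1 (e ▸ ht1)
    rw [hsplit2] at hh2
    rcases List.mem_append.1 hh2 with h' | h'
    · rcases List.mem_append.1 h' with h'' | h''
      · left
        exact (h2_a.2.2 h h'' s (by simp)).to_reflTransGen.trans hsv
      · rcases List.mem_cons.1 h'' with rfl | h3
        · exact absurd rfl hhs
        · -- h in M2 : contradiction with level 1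
          exfalso
          obtain ⟨Mc, Md, rfl⟩ := List.append_of_mem h3
          have hchain2' : List.Chain' N.E ((s :: Mc) ++ (h :: (Md ++ [t]))) := by
            have e : s :: (Mc ++ h :: Md) ++ [t] = (s :: Mc) ++ (h :: (Md ++ [t])) := by simp
            rwa [e] at hchain2
          have hpred : N.E ((s :: Mc).getLast (by simp)) h := by
            have := (List.isChain_append.1 hchain2').2.2
            exact this _ (by rw [List.getLast?_eq_getLast_of_ne_nil (by simp)]; rfl) h rfl
          have hpredB : (s :: Mc).getLast (by simp) ∈ B := by
            rcases List.mem_cons.1 (List.getLast_mem (l := s :: Mc) (by simp)) with h4 | h4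
            · rw [h4]; exact hsB
            · exact hM2B _ (by simp [h4])
          have hhB : h ∈ B := hM2B h (by simp)
          have hhnm : ¬ N.MaxIn B h := by
            rintro ⟨-, hmax⟩
            have heq := hmax _ hpredB (below_of_E hpred)
            exact ne_of_E (N := N) hpred heq
          exact hht (hybrid_unique_in_block hlvl hB ⟨htB, hthyb, htnm⟩ ⟨hhB, hhyb, hhnm⟩).symm
    · rcases List.mem_cons.1 h' with rfl | h4
      · exact absurd rfl hht
      · right
        exact hvt.trans (h2_td.1 h h4).to_reflTransGen
/-! ### Hybrid comparability (key structural lemma for level-1 networks) -/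

lemma hybrid_comparable (hnet : N.IsNetwork) (hlvl : N.IsLevel 1)
    {h v y : V} (hh : N.IsHybrid h) (hvy : N.below v y) (hhy : N.below h y) :
    N.below h v ∨ N.below v h := by
  by_cases h1 : N.below h v
  · exact Or.inl h1
  by_cases h2 : N.below v h
  · exact Or.inr h2
  exfalso
  obtain ⟨r, -, hr⟩ := root_above (N := N) hnet
  obtain ⟨lrv, hlrv⟩ := IsPath.of_below (N := N) (hr v)
  obtain ⟨lvy, hlvy⟩ := IsPath.of_below (N := N) hvy
  obtain ⟨lrh, hlrh⟩ := IsPath.of_below (N := N) (hr h)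
  obtain ⟨lhy, hlhy⟩ := IsPath.of_below (N := N) hhy
  have hp1 : N.IsPath r y (lrv ++ lvy.tail) := hlrv.concat hlvy
  have hp2 : N.IsPath r y (lrh ++ lhy.tail) := hlrh.concat hlhy
  have hv1 : v ∈ lrv ++ lvy.tail := List.mem_append.2 (Or.inl hlrv.mem_last)
  have hv2 : v ∉ lrh ++ lhy.tail := by
    intro hmem
    rcases List.mem_append.1 hmem with h' | h'
    · exact h2 (hlrh.below_of_mem h').2
    · exact h1 (hlhy.below_of_mem (List.mem_of_mem_tail h')).1
  have hh2 : h ∈ lrh ++ lhy.tail := List.mem_append.2 (Or.inl hlrh.mem_last)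
  have hh1 : h ∉ lrv ++ lvy.tail := by
    intro hmem
    rcases List.mem_append.1 hmem with h' | h'
    · exact h1 (hlrv.below_of_mem h').2
    · exact h2 (hlvy.below_of_mem (List.mem_of_mem_tail h')).1
  obtain ⟨B, s, t, -, -, -, -, -, -, -, -, -, -, -, -, -, -, hcl15⟩ :=
    cycle_main hlvl hp1 hp2 hv1 hv2
  rcases hcl15 h hh2 hh1 hh with h' | h'
  · exact h1 h'
  · exact h2 h'

/-! ### The child-cycle lemma -/

lemma child_cycle (hlvl : N.IsLevel 1) {w c c' ℓ : V}
    (hc : N.E w c) (hc' : N.E w c') (hne : c ≠ c')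
    (h1 : N.below c ℓ) (h2 : N.below c' ℓ) :
    ∃ (B : Set V) (ζ : V), N.IsBlock B ∧ w ∈ B ∧ c ∈ B ∧ c' ∈ B ∧ ζ ∈ B ∧
      N.IsHybrid ζ ∧ ¬ N.MaxIn B ζ ∧ N.below ζ ℓ ∧ N.below w ζ ∧ ζ ≠ w := by
  classical
  have hwc : w ≠ c := ne_of_E hc
  have hwc' : w ≠ c' := ne_of_E hc'
  -- an auxiliary construction for the comparable case
  have aux : ∀ (d d' : V), N.E w d → N.E w d' → d ≠ d' → N.below d d' →
      ∃ (B : Set V) (ζ : V), N.IsBlock B ∧ w ∈ B ∧ d ∈ B ∧ d' ∈ B ∧ ζ ∈ B ∧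
        N.IsHybrid ζ ∧ ¬ N.MaxIn B ζ ∧ ζ = d' := by
    intro d d' hd hd' hdd' hbd
    obtain ⟨ldd, hldd⟩ := IsPath.of_below (N := N) hbd
    have hp1 : N.IsPath w d' (w :: ldd) := IsPath.cons hd hldd
    have hp2 : N.IsPath w d' [w, d'] :=
      ⟨by simp, by simp, by simp, List.isChain_pair.2 hd'⟩
    have hd1 : d ∈ w :: ldd := List.mem_cons_of_mem _ hldd.mem_head
    have hd2 : d ∉ [w, d'] := by
      intro hmem
      rcases (by simpa using hmem : d = w ∨ d = d') with rfl | rfl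
      · exact (ne_of_E hd) rfl
      · exact hdd' rfl
    obtain ⟨B, s, t, hB, -, hs2, -, ht2, hsd, hdt, hsB, htB, hdB, hthyb, htnm, -, -, -⟩ :=
      cycle_main hlvl hp1 hp2 hd1 hd2
    have hsw : s = w := by
      rcases (by simpa using hs2 : s = w ∨ s = d') with rfl | rfl
      · rfl
      · exfalso
        have : d = s := below_antisymm hbd hsd
        exact hdd' this
    have htd' : t = d' := by
      rcases (by simpa using ht2 : t = w ∨ t = d') with rfl | rfl
      · exfalso
        have : t = d := below_antisymm (below_of_E hd) hdt
        exact (ne_of_E hd) this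
      · rfl
    refine ⟨B, t, hB, hsw ▸ hsB, hdB, htd' ▸ htB, htB, hthyb, htnm, htd'⟩
  by_cases hcc' : N.below c c'
  · obtain ⟨B, ζ, hB, hwB, hcB, hc'B, hζB, hζh, hζnm, hζeq⟩ := aux c c' hc hc' hne hcc'
    exact ⟨B, ζ, hB, hwB, hcB, hc'B, hζB, hζh, hζnm, hζeq ▸ h2, hζeq ▸ (below_of_E hc'),
      hζeq ▸ hwc'.symm⟩
  by_cases hc'c : N.below c' c
  · obtain ⟨B, ζ, hB, hwB, hc'B, hcB, hζB, hζh, hζnm, hζeq⟩ := aux c' c hc' hc hne.symm hc'c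
    exact ⟨B, ζ, hB, hwB, hcB, hc'B, hζB, hζh, hζnm, hζeq ▸ h1, hζeq ▸ (below_of_E hc),
      hζeq ▸ hwc.symm⟩
  -- incomparable case
  obtain ⟨lcl, hlcl⟩ := IsPath.of_below (N := N) h1
  obtain ⟨lcl', hlcl'⟩ := IsPath.of_below (N := N) h2
  have hp1 : N.IsPath w ℓ (w :: lcl) := IsPath.cons hc hlcl
  have hp2 : N.IsPath w ℓ (w :: lcl') := IsPath.cons hc' hlcl'
  have hv1 : c ∈ w :: lcl := List.mem_cons_of_mem _ hlcl.mem_head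
  have hv2 : c ∉ w :: lcl' := by
    intro hmem
    rcases List.mem_cons.1 hmem with h' | h'
    · exact hwc h'.symm
    · exact hc'c (hlcl'.below_of_mem h').1
  obtain ⟨B, s, t, hB, hs1, hs2, ht1, ht2, hsc, hct, hsB, htB, hcB, hthyb, htnm,
    hcl13, hcl14, -⟩ := cycle_main hlvl hp1 hp2 hv1 hv2
  have hsw : s = w := by
    rcases List.mem_cons.1 hs2 with h' | h'
    · exact h'
    · exact absurd ((hlcl'.below_of_mem h').1.trans hsc) hc'c
  have htw : t ≠ w := by
    rintro rfl
    exact hwc (below_antisymm (below_of_E hc) hct)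
  have htc' : N.below c' t := by
    rcases List.mem_cons.1 ht2 with h' | h'
    · exact absurd h' htw
    · exact (hlcl'.below_of_mem h').1
  have htl : N.below t ℓ := hcl13 ℓ hp1.mem_last hp2.mem_last h1
  have hc'B : c' ∈ B :=
    hcl14 c' (List.mem_cons_of_mem _ hlcl'.mem_head) (hsw ▸ below_of_E hc') htc'
  exact ⟨B, t, hB, hsw ▸ hsB, hcB, hc'B, htB, hthyb, htnm, htl,
    (below_of_E hc).trans hct, htw⟩

end DAGOn

/-! ### Combinatorial facts about cycle graphs -/

namespace HoleAux

open SimpleGraph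
open Fin.CommRing

variable {n : ℕ} [NeZero n]

lemma natCast_ne_zero {a : ℕ} (h0 : a ≠ 0) (hlt : a < n) : ((a : ℕ) : Fin n) ≠ 0 := by
  intro e
  have : a % n = 0 := by
    have := congrArg Fin.val e
    rwa [Fin.val_natCast] at this
  rw [Nat.mod_eq_of_lt hlt] at this
  exact h0 this

lemma one_ne (hn : 5 ≤ n) : (1 : Fin n) ≠ 0 := by
  have := natCast_ne_zero (n := n) (a := 1) (by omega) (by omega)
  simpa using this

lemma two_ne (hn : 5 ≤ n) : (2 : Fin n) ≠ 0 := by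
  have := natCast_ne_zero (n := n) (a := 2) (by omega) (by omega)
  simpa using this

lemma three_ne (hn : 5 ≤ n) : (3 : Fin n) ≠ 0 := by
  have := natCast_ne_zero (n := n) (a := 3) (by omega) (by omega)
  simpa using this

lemma four_ne (hn : 5 ≤ n) : (4 : Fin n) ≠ 0 := by
  have := natCast_ne_zero (n := n) (a := 4) (by omega) (by omega)
  simpa using this

lemma cyc_adj (hn : 5 ≤ n) {u v : Fin n} :
    (cycleGraph n).Adj u v ↔ u - v = 1 ∨ v - u = 1 := by
  obtain ⟨k, rfl⟩ : ∃ k, n = k + 2 := ⟨n - 2, by omega⟩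
  exact cycleGraph_adj

lemma adj_succ (hn : 5 ≤ n) (u : Fin n) : (cycleGraph n).Adj u (u + 1) :=
  (cyc_adj hn).2 (Or.inr (by ring))

lemma adj_cases (hn : 5 ≤ n) {u v : Fin n} (h : (cycleGraph n).Adj u v) :
    v = u + 1 ∨ v = u - 1 := by
  rcases (cyc_adj hn).1 h with h' | h'
  · right; linear_combination -h'
  · left; linear_combination h'

lemma succ_ne_pred (hn : 5 ≤ n) (u : Fin n) : u + 1 ≠ u - 1 := by
  intro e
  exact two_ne hn (by linear_combination e)

lemma pair_cover {x y r s : Fin n} (hxy : x ≠ y) (hrs : r ≠ s)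
    (hr : r = x ∨ r = y) (hs : s = x ∨ s = y) :
    (r = x ∧ s = y) ∨ (r = y ∧ s = x) := by
  rcases hr with rfl | rfl <;> rcases hs with rfl | rfl <;> simp_all

lemma no_three_neighbors (hn : 5 ≤ n) {z a b c : Fin n}
    (hab : a ≠ b) (hac : a ≠ c) (hbc : b ≠ c)
    (h1 : (cycleGraph n).Adj z a) (h2 : (cycleGraph n).Adj z b)
    (h3 : (cycleGraph n).Adj z c) : False := by
  rcases adj_cases hn h1 with rfl | rfl <;>
    rcases adj_cases hn h2 with rfl | rfl <;>
      rcases adj_cases hn h3 with rfl | rfl <;> simp_all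

lemma no_c4 (hn : 5 ≤ n) {p q r s : Fin n} (hpq : p ≠ q) (hrs : r ≠ s)
    (h1 : (cycleGraph n).Adj p r) (h2 : (cycleGraph n).Adj p s)
    (h3 : (cycleGraph n).Adj q r) (h4 : (cycleGraph n).Adj q s) : False := by
  have c1 := pair_cover (succ_ne_pred hn p) hrs (adj_cases hn h1) (adj_cases hn h2)
  have c2 := pair_cover (succ_ne_pred hn q) hrs (adj_cases hn h3) (adj_cases hn h4)
  rcases c1 with ⟨e1, e2⟩ | ⟨e1, e2⟩ <;> rcases c2 with ⟨e3, e4⟩ | ⟨e3, e4⟩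
  · exact hpq (by linear_combination e3 - e1)
  · exact four_ne hn (by linear_combination -e1 + e2 + e3 - e4)
  · exact four_ne hn (by linear_combination e1 - e2 - e3 + e4)
  · exact hpq (by linear_combination e3 - e1)

lemma nat_boundary (ψ : ℕ → Prop) (b : ℕ) :
    ∀ a, ψ a → ¬ ψ b → a < b → ∃ r, a ≤ r ∧ r < b ∧ ψ r ∧ ¬ ψ (r + 1) := by
  classical
  induction b with
  | zero => intro a _ _ h; omega
  | succ b ih =>
    intro a ha hb hab
    by_cases hψ : ψ b
    · exact ⟨b, Nat.lt_succ_iff.1 hab, Nat.lt_succ_self b, hψ, hb⟩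
    · by_cases heq : a = b
      · exact absurd (heq ▸ ha) hψ
      · obtain ⟨r, hr1, hr2, hr3, hr4⟩ := ih a ha hψ (by omega)
        exact ⟨r, hr1, by omega, hr3, hr4⟩

lemma fin_boundary (hn : 5 ≤ n) (φ : Fin n → Prop) {i0 j0 : Fin n}
    (hi : φ i0) (hj : ¬ φ j0) : ∃ u, φ u ∧ ¬ φ (u + 1) := by
  classical
  have hij : i0 ≠ j0 := fun e => hj (e ▸ hi)
  set d := (j0 - i0).val with hd
  have hdpos : d ≠ 0 := by
    intro e
    have h0 : j0 - i0 = 0 := by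
      apply Fin.ext
      simpa [hd] using e
    have : j0 = i0 := by linear_combination h0
    exact hij this.symm
  have hcast : i0 + ((d : ℕ) : Fin n) = j0 := by
    rw [hd, Fin.cast_val_eq_self]; ring
  obtain ⟨r, -, -, h3, h4⟩ := nat_boundary (fun r => φ (i0 + ((r : ℕ) : Fin n))) d 0
    (by simpa using hi)
    (by show ¬ φ (i0 + ((d : ℕ) : Fin n)); rw [hcast]; exact hj) (by omega)
  refine ⟨i0 + ((r : ℕ) : Fin n), h3, ?_⟩
  have e : i0 + ((r : ℕ) : Fin n) + 1 = i0 + (((r + 1 : ℕ)) : Fin n) := by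
    push_cast; ring
  rw [e]
  exact h4

lemma fin_boundary_avoid (hn : 5 ≤ n) (φ : Fin n → Prop) {iy k1 k2 : Fin n}
    (h1y : k1 ≠ iy) (h2y : k2 ≠ iy) (hφ1 : φ k1) (hφ2 : ¬ φ k2) :
    ∃ u : Fin n, u ≠ iy ∧ u + 1 ≠ iy ∧
      ((φ u ∧ ¬ φ (u + 1)) ∨ (¬ φ u ∧ φ (u + 1))) := by
  classical
  have hcast1 : iy + (((k1 - iy).val : ℕ) : Fin n) = k1 := by
    rw [Fin.cast_val_eq_self]; ring
  have hcast2 : iy + (((k2 - iy).val : ℕ) : Fin n) = k2 := by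
    rw [Fin.cast_val_eq_self]; ring
  have hd1pos : (k1 - iy).val ≠ 0 := by
    intro e
    have h0 : k1 - iy = 0 := Fin.ext (by simpa using e)
    exact h1y (by linear_combination h0)
  have hd2pos : (k2 - iy).val ≠ 0 := by
    intro e
    have h0 : k2 - iy = 0 := Fin.ext (by simpa using e)
    exact h2y (by linear_combination h0)
  have hd1lt : (k1 - iy).val < n := (k1 - iy).isLt
  have hd2lt : (k2 - iy).val < n := (k2 - iy).isLt
  have hne : (k1 - iy).val ≠ (k2 - iy).val := by
    intro e
    have : k1 = k2 := by rw [← hcast1, ← hcast2, e]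
    exact hφ2 (this ▸ hφ1)
  have key : ∀ r : ℕ, 1 ≤ r → r + 1 ≤ n - 1 →
      (iy + ((r : ℕ) : Fin n) ≠ iy ∧ iy + ((r : ℕ) : Fin n) + 1 ≠ iy) := by
    intro r hr1 hr2
    constructor
    · intro e
      have h0 : ((r : ℕ) : Fin n) = 0 :=
        add_left_cancel (a := iy) (b := ((r : ℕ) : Fin n)) (c := 0) (by simpa using e)
      exact natCast_ne_zero (by omega) (by omega) h0
    · intro e
      have e2 : iy + (((r + 1 : ℕ)) : Fin n) = iy := by
        push_cast
        linear_combination e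
      have h0 : (((r + 1 : ℕ)) : Fin n) = 0 :=
        add_left_cancel (a := iy) (b := (((r + 1 : ℕ)) : Fin n)) (c := 0)
          (by simpa using e2)
      exact natCast_ne_zero (by omega) (by omega) h0
  rcases lt_or_gt_of_ne hne with hlt | hlt
  · obtain ⟨r, hr1, hr2, hr3, hr4⟩ :=
      nat_boundary (fun r => φ (iy + ((r : ℕ) : Fin n))) (k2 - iy).val (k1 - iy).val
      (by show φ (iy + (((k1 - iy).val : ℕ) : Fin n)); rw [hcast1]; exact hφ1)
      (by show ¬ φ (iy + (((k2 - iy).val : ℕ) : Fin n)); rw [hcast2]; exact hφ2) hlt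
    obtain ⟨hu1, hu2⟩ := key r (by omega) (by omega)
    refine ⟨iy + ((r : ℕ) : Fin n), hu1, hu2, Or.inl ⟨hr3, ?_⟩⟩
    have e : iy + ((r : ℕ) : Fin n) + 1 = iy + (((r + 1 : ℕ)) : Fin n) := by
      push_cast; ring
    rw [e]; exact hr4
  · obtain ⟨r, hr1, hr2, hr3, hr4⟩ :=
      nat_boundary (fun r => ¬ φ (iy + ((r : ℕ) : Fin n))) (k1 - iy).val (k2 - iy).val
      (by show ¬ φ (iy + (((k2 - iy).val : ℕ) : Fin n)); rw [hcast2]; exact hφ2)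
      (by show ¬ ¬ φ (iy + (((k1 - iy).val : ℕ) : Fin n)); rw [hcast1];
          exact fun h => h hφ1) hlt
    obtain ⟨hu1, hu2⟩ := key r (by omega) (by omega)
    refine ⟨iy + ((r : ℕ) : Fin n), hu1, hu2, Or.inr ⟨hr3, ?_⟩⟩
    have e : iy + ((r : ℕ) : Fin n) + 1 = iy + (((r + 1 : ℕ)) : Fin n) := by
      push_cast; ring
    rw [e]
    exact not_not.1 hr4

lemma no_module (hn : 5 ≤ n) (M : Set (Fin n))
    (hmod : ∀ k ∉ M, ∀ i ∈ M, ∀ j ∈ M,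
      ((cycleGraph n).Adj k i ↔ (cycleGraph n).Adj k j))
    {a b : Fin n} (hab : a ≠ b) (ha : a ∈ M) (hb : b ∈ M)
    {k0 : Fin n} (hk0 : k0 ∉ M) : False := by
  classical
  obtain ⟨u, hu, hu1⟩ := fin_boundary hn (· ∈ M) ha hk0
  set k := u + 1 with hk
  have hadj_ku : (cycleGraph n).Adj k u := (adj_succ hn u).symm
  have allM : ∀ p ∈ M, (cycleGraph n).Adj k p := by
    intro p hp
    exact (hmod k hu1 p hp u hu).2 hadj_ku
  obtain ⟨hkp, hkm⟩ : (k + 1 ∈ M) ∧ (k - 1 ∈ M) := by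
    rcases pair_cover (succ_ne_pred hn k) hab
      (adj_cases hn (allM a ha)) (adj_cases hn (allM b hb)) with ⟨e1, e2⟩ | ⟨e1, e2⟩
    · exact ⟨e1 ▸ ha, e2 ▸ hb⟩
    · exact ⟨e2 ▸ hb, e1 ▸ ha⟩
  have hqM : k + 2 ∉ M := by
    intro hq
    rcases adj_cases hn (allM _ hq) with e | e
    · exact one_ne hn (by linear_combination e)
    · exact three_ne hn (by linear_combination e)
  have hiff := hmod (k + 2) hqM (k + 1) hkp (k - 1) hkm
  have hL : (cycleGraph n).Adj (k + 2) (k + 1) := by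
    have := (adj_succ hn (k + 1)).symm
    have e : k + 1 + 1 = k + 2 := by ring
    rwa [e] at this
  have hR := hiff.1 hL
  rcases adj_cases hn hR with e | e
  · exact four_ne hn (by linear_combination -e)
  · exact two_ne hn (by linear_combination -e)

end HoleAux

/-! ### LCA utilities -/

namespace DAGOn

open Relation

variable {α V : Type} {N : DAGOn α V} [Finite V]

noncomputable def thelca (h2 : N.Has2LCA) (a b : α) : V := (h2 a b).exists.choose

lemma thelca_isLCA (h2 : N.Has2LCA) (a b : α) : N.IsLCA (thelca h2 a b) {a, b} :=
  (h2 a b).exists.choose_spec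

lemma thelca_left (h2 : N.Has2LCA) (a b : α) :
    N.below (thelca h2 a b) (N.leaf a) :=
  (thelca_isLCA h2 a b).1 a (by simp)

lemma thelca_right (h2 : N.Has2LCA) (a b : α) :
    N.below (thelca h2 a b) (N.leaf b) :=
  (thelca_isLCA h2 a b).1 b (by simp)

lemma below_thelca (h2 : N.Has2LCA) {a b : α} {u : V}
    (ha : N.below u (N.leaf a)) (hb : N.below u (N.leaf b)) :
    N.below u (thelca h2 a b) := by
  have hu : N.IsCommonAnc u {a, b} := by
    rintro z (rfl | hz)
    · exact ha
    · rcases hz with rfl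
      exact hb
  exact isLCA_below_of_commonAnc hu (h2 a b)

lemma thelca_unique (h2 : N.Has2LCA) {a b : α} {v : V} (hv : N.IsLCA v {a, b}) :
    v = thelca h2 a b :=
  (h2 a b).unique hv (thelca_isLCA h2 a b)

lemma adj_iff_label {tl : V → Bool} {G : SimpleGraph α} (hex : N.Explains tl G)
    {a b : α} (hne : a ≠ b) :
    G.Adj a b ↔ tl (thelca hex.1 a b) = true := by
  rw [hex.2 a b hne]
  constructor
  · rintro ⟨v, hv, ht⟩
    exact (thelca_unique hex.1 hv) ▸ ht
  · intro h
    exact ⟨_, thelca_isLCA hex.1 a b, h⟩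

lemma hybrid_module (hnet : N.IsNetwork) (hlvl : N.IsLevel 1) (h2 : N.Has2LCA)
    {h : V} (hh : N.IsHybrid h) {a b c : α}
    (hba : ¬ N.below h (N.leaf a)) (hbb : N.below h (N.leaf b))
    (hbc : N.below h (N.leaf c)) : thelca h2 a b = thelca h2 a c := by
  have key : ∀ b' : α, N.below h (N.leaf b') → N.below (thelca h2 a b') h := by
    intro b' hbb'
    rcases hybrid_comparable hnet hlvl hh (thelca_right h2 a b') hbb' with h' | h'
    · exact absurd (h'.trans (thelca_left h2 a b')) hba
    · exact h'
  have h1 : N.below (thelca h2 a b) (thelca h2 a c) :=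
    below_thelca h2 (thelca_left h2 a b) ((key b hbb).trans hbc)
  have h2' : N.below (thelca h2 a c) (thelca h2 a b) :=
    below_thelca h2 (thelca_left h2 a c) ((key c hbc).trans hbb)
  exact below_antisymm h1 h2'

end DAGOn

/-! ### The core theorem: no level-1 network explains a graph with a hole on its leaves -/

namespace DAGOn

open Relation HoleAux

variable {α V : Type} {N : DAGOn α V} [Finite V]

theorem no_hole_core {n : ℕ} (hn : 5 ≤ n)
    (hnet : N.IsNetwork) (hlvl : N.IsLevel 1) {tl : V → Bool} {G : SimpleGraph α}
    (hex : N.Explains tl G) (x : Fin n → α) (hinj : Function.Injective x)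
    (hadj : ∀ i j, G.Adj (x i) (x j) ↔ (SimpleGraph.cycleGraph n).Adj i j) : False := by
  classical
  haveI : NeZero n := ⟨by omega⟩
  set ℓ : Fin n → V := fun i => N.leaf (x i) with hℓ
  have hadj' : ∀ i j : Fin n, i ≠ j →
      ((SimpleGraph.cycleGraph n).Adj i j ↔ tl (thelca hex.1 (x i) (x j)) = true) := by
    intro i j hne
    rw [← hadj i j]
    exact adj_iff_label hex (fun e => hne (hinj e))
  -- minimal common ancestor w
  have hCAne : {u : V | ∀ i, N.below u (ℓ i)}.Nonempty := by
    obtain ⟨r, -, hr⟩ := root_above (N := N) hnet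
    exact ⟨r, fun i => hr _⟩
  obtain ⟨w, hwCA, hwmin⟩ := exists_minimal (N := N) hCAne
  have hwCA' : ∀ i, N.below w (ℓ i) := hwCA
  -- every leaf is below some child of w
  have hwchild : ∀ i : Fin n, ∃ c, N.E w c ∧ N.below c (ℓ i) := by
    intro i
    rcases (hwCA' i).cases_head with he | ⟨c, hwc, hc⟩
    · exfalso
      have h2 := hwCA' (i + 1)
      rw [he] at h2
      have h3 : ℓ (i + 1) = N.leaf (x i) := below_leaf_eq h2
      have h4 : i + 1 = i := hinj (N.leaf_inj h3)
      have h5 : (1 : Fin n) = 0 :=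
        add_left_cancel (a := i) (b := (1 : Fin n)) (c := 0) (by simpa using h4)
      exact one_ne hn h5
    · exact ⟨c, hwc, hc⟩
  -- pairs with no common child have lca w
  have hcross : ∀ i j : Fin n,
      (∀ c, N.E w c → N.below c (ℓ i) → ¬ N.below c (ℓ j)) →
      thelca hex.1 (x i) (x j) = w := by
    intro i j hno
    have hwv : N.below w (thelca hex.1 (x i) (x j)) :=
      below_thelca hex.1 (hwCA' i) (hwCA' j)
    by_contra hne
    rcases hwv.cases_head with he | ⟨c, hwc, hcv⟩
    · exact hne he.symm
    · exact hno c hwc (hcv.trans (thelca_left hex.1 (x i) (x j)))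
        (hcv.trans (thelca_right hex.1 (x i) (x j)))
  -- the component relation
  set R : Fin n → Fin n → Prop :=
    fun i j => ∃ c, N.E w c ∧ N.below c (ℓ i) ∧ N.below c (ℓ j) with hR
  have hRsymm : Symmetric R := by
    rintro i j ⟨c, h1, h2, h3⟩
    exact ⟨c, h1, h3, h2⟩
  set Comp : Fin n → Fin n → Prop := Relation.ReflTransGen R with hComp
  have hCompSymm : ∀ {i j}, Comp i j → Comp j i :=
    fun h => by haveI : Std.Symm R := ⟨fun a b h => hRsymm h⟩; exact Std.Symm.symm _ _ h
  have hCompTrans : ∀ {i j k}, Comp i j → Comp j k → Comp i k :=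
    fun h1 h2 => Relation.ReflTransGen.trans h1 h2
  have hncadj : ∀ i j, ¬ Comp i j →
      ((SimpleGraph.cycleGraph n).Adj i j ↔ tl w = true) := by
    intro i j hc
    have hne : i ≠ j := by
      rintro rfl
      exact hc Relation.ReflTransGen.refl
    have hnoR : ∀ c, N.E w c → N.below c (ℓ i) → ¬ N.below c (ℓ j) := by
      intro c h1 h2 h3
      exact hc (Relation.ReflTransGen.single ⟨c, h1, h2, h3⟩)
    rw [hadj' i j hne, hcross i j hnoR]
  by_cases hsc : ∀ i j, Comp i j
  case neg =>
    -- several components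
    push_neg at hsc
    obtain ⟨i0, j0, hij0⟩ := hsc
    cases htw : tl w with
    | false =>
      obtain ⟨u, hu, hu1⟩ := fin_boundary hn (fun k => Comp k i0)
        (Relation.ReflTransGen.refl) (fun h => hij0 (hCompSymm h))
      have hcr : ¬ Comp u (u + 1) := fun h => hu1 (hCompTrans (hCompSymm h) hu)
      have := (hncadj u (u + 1) hcr).1 (adj_succ hn u)
      rw [htw] at this
      exact absurd this (by simp)
    | true =>
      set SA : Finset (Fin n) := Finset.univ.filter (fun k => Comp k i0) with hSA
      set SB : Finset (Fin n) := Finset.univ.filter (fun k => ¬ Comp k i0) with hSB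
      have hcard : SA.card + SB.card = n := by
        rw [hSA, hSB, Finset.card_filter_add_card_filter_not]
        simp
      have hadjAB : ∀ a ∈ SA, ∀ b ∈ SB, (SimpleGraph.cycleGraph n).Adj a b := by
        intro a ha b hb
        rw [hSA, Finset.mem_filter] at ha
        rw [hSB, Finset.mem_filter] at hb
        have hnc : ¬ Comp a b := fun h => hb.2 (hCompTrans (hCompSymm h) ha.2)
        rw [hncadj a b hnc, htw]
      have hi0A : i0 ∈ SA := by
        rw [hSA, Finset.mem_filter]
        exact ⟨Finset.mem_univ _, Relation.ReflTransGen.refl⟩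
      have hj0B : j0 ∈ SB := by
        rw [hSB, Finset.mem_filter]
        exact ⟨Finset.mem_univ _, fun h => hij0 (hCompSymm h)⟩
      rcases Nat.lt_or_ge 2 SA.card with h3 | h3
      · obtain ⟨a, b, c, ha, hb, hc, hab, hac, hbc⟩ := Finset.two_lt_card_iff.1 h3
        exact no_three_neighbors hn hab hac hbc
          ((hadjAB a ha j0 hj0B).symm) ((hadjAB b hb j0 hj0B).symm)
          ((hadjAB c hc j0 hj0B).symm)
      rcases Nat.lt_or_ge 2 SB.card with h3' | h3'
      · obtain ⟨a, b, c, ha, hb, hc, hab, hac, hbc⟩ := Finset.two_lt_card_iff.1 h3'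
        exact no_three_neighbors hn hab hac hbc
          (hadjAB i0 hi0A a ha) (hadjAB i0 hi0A b hb) (hadjAB i0 hi0A c hc)
      omega
  case pos =>
    -- single component
    have hnocover : ∀ c, N.E w c → ¬ ∀ i, N.below c (ℓ i) := by
      intro c hc hall
      exact ne_of_E (N := N) hc (hwmin c hall (below_of_E hc)).symm
    -- multi-child leaves
    set Multi : Fin n → Prop := fun k => ∃ c c', N.E w c ∧ N.E w c' ∧ c ≠ c' ∧
      N.below c (ℓ k) ∧ N.below c' (ℓ k) with hMulti
    have hwalk : ∀ j i : Fin n, Comp i j → ∀ c, N.E w c → N.below c (ℓ i) →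
        (N.below c (ℓ j) ∨ ∃ k, Multi k ∧ N.below c (ℓ k)) := by
      intro j i hC
      induction hC using Relation.ReflTransGen.head_induction_on with
      | refl => exact fun c _ hc => Or.inl hc
      | head hr _ ih =>
        rename_i a m hC'
        intro c hc hbc
        obtain ⟨d, hd, hda, hdm⟩ := hr
        by_cases hcd : c = d
        · exact ih c hc (hcd ▸ hdm)
        · exact Or.inr ⟨a, ⟨c, d, hc, hd, hcd, hbc, hda⟩, hbc⟩
    -- find a multi-child leaf
    obtain ⟨c1, hc1, hbc1⟩ := hwchild 0
    obtain ⟨i2, hi2⟩ : ∃ i2, ¬ N.below c1 (ℓ i2) := by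
      by_contra hcon
      push_neg at hcon
      exact hnocover c1 hc1 hcon
    obtain ⟨y0, hy0M, -⟩ : ∃ k, Multi k ∧ N.below c1 (ℓ k) := by
      rcases hwalk i2 0 (hsc 0 i2) c1 hc1 hbc1 with h' | h'
      · exact absurd h' hi2
      · exact h'
    obtain ⟨c, c', hc, hc', hcne, hbc, hbc'⟩ := hy0M
    obtain ⟨B0, h, hB0, hwB0, hcB0, hc'B0, hhB0, hhyb, hhnm, hhy0, hwh, hhw⟩ :=
      child_cycle hlvl hc hc' hcne hbc hbc'
    -- block propagation between children sharing a leaf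
    have hpair : ∀ (d d' : V) (k : Fin n), N.E w d → N.E w d' →
        N.below d (ℓ k) → N.below d' (ℓ k) → d ∈ B0 → d' ∈ B0 := by
      intro d d' k hd hd' hbd hbd' hdB
      by_cases hdd : d = d'
      · exact hdd ▸ hdB
      · obtain ⟨B1, h1, hB1, hwB1, hdB1, hd'B1, -, -, -, -, -, -⟩ :=
          child_cycle hlvl hd hd' hdd hbd hbd'
        have hBeq : B1 = B0 :=
          block_eq_of_two_mem hB1 hB0 (ne_of_E hd) hwB1 hwB0 hdB1 hdB
        exact hBeq ▸ hd'B1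
    have hchain : ∀ j i : Fin n, Comp i j → ∀ d, N.E w d → N.below d (ℓ i) → d ∈ B0 →
        ∀ d', N.E w d' → N.below d' (ℓ j) → d' ∈ B0 := by
      intro j i hC
      induction hC using Relation.ReflTransGen.head_induction_on with
      | refl =>
        intro d hd hbd hdB d' hd' hbd'
        exact hpair d d' _ hd hd' hbd hbd' hdB
      | head hr _ ih =>
        rename_i a m hC'
        intro d hd hbd hdB d' hd' hbd'
        obtain ⟨e, he, hea, hem⟩ := hr
        have heB : e ∈ B0 := hpair d e a hd he hbd hea hdB
        exact ih e he hem heB d' hd' hbd'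
    -- every multi-child leaf is below h
    have hmulti_below : ∀ k, Multi k → N.below h (ℓ k) := by
      rintro k ⟨d, d', hd, hd', hdd, hbd, hbd'⟩
      have hdB0 : d ∈ B0 := hchain k y0 (hsc y0 k) c hc hbc hcB0 d hd hbd
      obtain ⟨B2, h2', hB2, hwB2, hdB2, hd'B2, hh2B2, hh2hyb, hh2nm, hh2k, -, -⟩ :=
        child_cycle hlvl hd hd' hdd hbd hbd'
      have hBeq : B2 = B0 :=
        block_eq_of_two_mem hB2 hB0 (ne_of_E hd) hwB2 hwB0 hdB2 hdB0
      have he : h2' = h := hybrid_unique_in_block hlvl hB0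
        ⟨hBeq ▸ hh2B2, hh2hyb, hBeq ▸ hh2nm⟩ ⟨hhB0, hhyb, hhnm⟩
      exact he ▸ hh2k
    -- the set of leaves below h is a module of the hole, hence a singleton {y0}
    have hMnotall : ∃ k, ¬ N.below h (ℓ k) := by
      by_contra hall
      push_neg at hall
      exact hhw (hwmin h hall hwh)
    obtain ⟨k0, hk0⟩ := hMnotall
    have hmod : ∀ k ∉ {k : Fin n | N.below h (ℓ k)},
        ∀ i ∈ {k : Fin n | N.below h (ℓ k)}, ∀ j ∈ {k : Fin n | N.below h (ℓ k)},
        ((SimpleGraph.cycleGraph n).Adj k i ↔ (SimpleGraph.cycleGraph n).Adj k j) := by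
      intro k hk i hi j hj
      have hki : k ≠ i := fun e => hk (e ▸ hi)
      have hkj : k ≠ j := fun e => hk (e ▸ hj)
      rw [hadj' k i hki, hadj' k j hkj,
        hybrid_module hnet hlvl hex.1 hhyb hk hi hj]
    have hsingle : ∀ k, N.below h (ℓ k) → k = y0 := by
      intro k hk
      by_contra hne
      exact no_module hn _ hmod hne hk hhy0 hk0
    -- y0 is below every used child
    have hy0child : ∀ d, N.E w d → ∀ k, N.below d (ℓ k) → N.below d (ℓ y0) := by
      intro d hd k hbk
      rcases hwalk y0 k (hsc k y0) d hd hbk with h' | ⟨m, hmM, hbm⟩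
      · exact h'
      · exact (hsingle m (hmulti_below m hmM)) ▸ hbm
    -- all other leaves have a unique child
    have hsinglechild : ∀ k, k ≠ y0 → ∀ d d', N.E w d → N.E w d' →
        N.below d (ℓ k) → N.below d' (ℓ k) → d = d' := by
      intro k hk d d' hd hd' h1 h2
      by_contra hne
      exact hk (hsingle k (hmulti_below k ⟨d, d', hd, hd', hne, h1, h2⟩))
    -- cross-class pairs have lca w
    have hcross2 : ∀ k k' : Fin n, k ≠ y0 → k' ≠ y0 → ∀ d d', N.E w d → N.E w d' →
        d ≠ d' → N.below d (ℓ k) → N.below d' (ℓ k') →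
        thelca hex.1 (x k) (x k') = w := by
      intro k k' hk hk' d d' hd hd' hdd hbk hbk'
      refine hcross k k' ?_
      intro e he h1 h2
      have e1 : e = d := hsinglechild k hk e d he hd h1 hbk
      have e2 : e = d' := hsinglechild k' hk' e d' he hd' h2 hbk'
      exact hdd (e1 ▸ e2)
    -- final counting
    have hk1y : y0 + 1 ≠ y0 := by
      intro e
      exact one_ne hn (add_left_cancel (a := y0) (b := (1 : Fin n)) (c := 0)
        (by simpa using e))
    obtain ⟨d1, hd1, hbd1⟩ := hwchild (y0 + 1)
    by_cases hallc1 : ∀ k, k ≠ y0 → N.below d1 (ℓ k)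
    · refine hnocover d1 hd1 ?_
      intro i
      by_cases hi : i = y0
      · exact hi ▸ hy0child d1 hd1 (y0 + 1) hbd1
      · exact hallc1 i hi
    push_neg at hallc1
    obtain ⟨k2, hk2y, hnb2⟩ := hallc1
    have hAB : ∀ k k', k ≠ y0 → k' ≠ y0 → N.below d1 (ℓ k) → ¬ N.below d1 (ℓ k') →
        ((SimpleGraph.cycleGraph n).Adj k k' ↔ tl w = true) := by
      intro k k' hky hk'y hb hnb
      have hkk' : k ≠ k' := fun e => hnb (e ▸ hb)
      obtain ⟨e, he, hbe⟩ := hwchild k'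
      have hed1 : d1 ≠ e := fun he1 => hnb (he1 ▸ hbe)
      rw [hadj' k k' hkk', hcross2 k k' hky hk'y d1 e hd1 he hed1 hb hbe]
    cases htw : tl w with
    | false =>
      obtain ⟨u, huy, hu1y, hbd⟩ := fin_boundary_avoid hn (fun k => N.below d1 (ℓ k))
        hk1y hk2y hbd1 hnb2
      rcases hbd with ⟨hφ, hnφ⟩ | ⟨hnφ, hφ⟩
      · have := (hAB u (u + 1) huy hu1y hφ hnφ).1 (adj_succ hn u)
        rw [htw] at this
        exact absurd this (by simp)
      · have := (hAB (u + 1) u hu1y huy hφ hnφ).1 ((adj_succ hn u).symm)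
        rw [htw] at this
        exact absurd this (by simp)
    | true =>
      set SA : Finset (Fin n) :=
        Finset.univ.filter (fun k => k ≠ y0 ∧ N.below d1 (ℓ k)) with hSA
      set SB : Finset (Fin n) :=
        Finset.univ.filter (fun k => k ≠ y0 ∧ ¬ N.below d1 (ℓ k)) with hSB
      have hk1A : y0 + 1 ∈ SA :=
        Finset.mem_filter.2 ⟨Finset.mem_univ _, hk1y, hbd1⟩
      have hk2B : k2 ∈ SB :=
        Finset.mem_filter.2 ⟨Finset.mem_univ _, hk2y, hnb2⟩
      have hadjAB : ∀ a ∈ SA, ∀ b ∈ SB, (SimpleGraph.cycleGraph n).Adj a b := by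
        intro a ha b hb
        rw [hSA, Finset.mem_filter] at ha
        rw [hSB, Finset.mem_filter] at hb
        rw [hAB a b ha.2.1 hb.2.1 ha.2.2 hb.2.2]
        exact htw
      have hU : SA ∪ SB = Finset.univ.erase y0 := by
        ext z
        simp only [hSA, hSB, Finset.mem_union, Finset.mem_filter, Finset.mem_univ,
          true_and, Finset.mem_erase]
        tauto
      have hdisj : Disjoint SA SB := by
        rw [Finset.disjoint_left]
        intro a ha hb
        rw [hSA, Finset.mem_filter] at ha
        rw [hSB, Finset.mem_filter] at hb
        exact hb.2.2 ha.2.2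
      have hcard : SA.card + SB.card = n - 1 := by
        rw [← Finset.card_union_of_disjoint hdisj, hU,
          Finset.card_erase_of_mem (Finset.mem_univ _)]
        simp
      rcases Nat.lt_or_ge 2 SA.card with h3 | h3
      · obtain ⟨a, b, cc, ha, hb, hcc, hab, hac, hbc⟩ := Finset.two_lt_card_iff.1 h3
        exact no_three_neighbors hn hab hac hbc
          ((hadjAB a ha k2 hk2B).symm) ((hadjAB b hb k2 hk2B).symm)
          ((hadjAB cc hcc k2 hk2B).symm)
      rcases Nat.lt_or_ge 2 SB.card with h3' | h3'
      · obtain ⟨a, b, cc, ha, hb, hcc, hab, hac, hbc⟩ := Finset.two_lt_card_iff.1 h3'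
        exact no_three_neighbors hn hab hac hbc
          (hadjAB _ hk1A a ha) (hadjAB _ hk1A b hb) (hadjAB _ hk1A cc hcc)
      have hA2 : SA.card = 2 := by omega
      have hB2 : SB.card = 2 := by omega
      obtain ⟨a1, a2, ha12, hSAeq⟩ := Finset.card_eq_two.1 hA2
      obtain ⟨b1, b2, hb12, hSBeq⟩ := Finset.card_eq_two.1 hB2
      have ha1 : a1 ∈ SA := by rw [hSAeq]; simp
      have ha2 : a2 ∈ SA := by rw [hSAeq]; simp
      have hb1 : b1 ∈ SB := by rw [hSBeq]; simp
      have hb2 : b2 ∈ SB := by rw [hSBeq]; simp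
      exact no_c4 hn ha12 hb12 (hadjAB a1 ha1 b1 hb1) (hadjAB a1 ha1 b2 hb2)
        (hadjAB a2 ha2 b1 hb1) (hadjAB a2 ha2 b2 hb2)

end DAGOn

/-! ### Complementation and the main theorem -/

namespace DAGOn

variable {α V : Type} {N : DAGOn α V} [Finite V]

lemma explains_compl {tl : V → Bool} {G : SimpleGraph α} (hex : N.Explains tl G) :
    N.Explains (fun v => ! tl v) Gᶜ := by
  refine ⟨hex.1, ?_⟩
  intro a b hne
  rw [SimpleGraph.compl_adj]
  constructor
  · rintro ⟨-, hnadj⟩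
    refine ⟨thelca hex.1 a b, thelca_isLCA hex.1 a b, ?_⟩
    cases htv : tl (thelca hex.1 a b) with
    | false => simp [htv]
    | true => exact absurd ((adj_iff_label hex hne).2 htv) hnadj
  · rintro ⟨v, hv, htv⟩
    refine ⟨hne, ?_⟩
    intro hadj
    have h1 := (adj_iff_label hex hne).1 hadj
    rw [← thelca_unique hex.1 hv] at h1
    simp only [h1] at htv
    simp at htv

end DAGOn

lemma Level1Explainable.compl {α : Type} {G : SimpleGraph α}
    (h : Level1Explainable G) : Level1Explainable Gᶜ := by
  obtain ⟨V, hfin, N, t, hnet, hlvl, hex⟩ := h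
  haveI := hfin
  exact ⟨V, hfin, N, fun v => ! t v, hnet, hlvl, DAGOn.explains_compl hex⟩

theorem no_hole_graph {α : Type} {G : SimpleGraph α} {s : Set α} {n : ℕ}
    (h5 : 5 ≤ n) (iso : Nonempty (G.induce s ≃g SimpleGraph.cycleGraph n)) :
    ¬ Level1Explainable G := by
  rintro ⟨V, hfin, N, t, hnet, hlvl, hex⟩
  haveI := hfin
  obtain ⟨e⟩ := iso
  set x : Fin n → α := fun i => (e.symm i : α) with hx
  have hinj : Function.Injective x := by
    intro i j hij
    exact e.symm.toEquiv.injective (Subtype.ext hij)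
  have hadj : ∀ i j, G.Adj (x i) (x j) ↔ (SimpleGraph.cycleGraph n).Adj i j := by
    intro i j
    have h1 : (G.induce s).Adj (e.symm i) (e.symm j) ↔ (SimpleGraph.cycleGraph n).Adj i j :=
      e.symm.map_adj_iff
    rw [← h1]
    rfl
  exact DAGOn.no_hole_core h5 hnet hlvl hex x hinj hadj


theorem stmt17 {α : Type} [Finite α] (G : SimpleGraph α)
    (h : (∃ (s : Set α) (n : ℕ), 5 ≤ n ∧
            Nonempty (G.induce s ≃g SimpleGraph.cycleGraph n)) ∨
         (∃ (s : Set α) (n : ℕ), 5 ≤ n ∧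
            Nonempty (Gᶜ.induce s ≃g SimpleGraph.cycleGraph n))) :
    ¬ Level1Explainable G := by
  rcases h with ⟨s, n, h5, iso⟩ | ⟨s, n, h5, iso⟩
  · exact no_hole_graph h5 iso
  · intro hL
    exact no_hole_graph h5 iso hL.compl
end
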